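/- arXiv:1802.00767 — 13 statements merged into one kernel-verified Lean document; each statement's English description precedes it below -/
import Mathlib

section
/- Let C be a 2×2 complex matrix that is diagonalizable and positive stable (all eigenvalues have positive real part), and let μ be the minimum of the real parts of its eigenvalues. If P is a positive definite Hermitian 2×2 matrix satisfying C*P + PC ≥ 2μP (in the sense of Hermitian matrices), then P can be written as P = b₁ w₁w₁* + b₂ w₂w₂*, where w₁, w₂ are normalized eigenvectors of C* and b₁, b₂ > 0. -/
/-!
Write `C = V D V⁻¹` and let `v` be an eigenvector of `C` for an eigenvalue `λ` with `Re λ = μ`.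
The quadratic form of `Q = C*P + PC - 2μP` vanishes at `v`, so `Qv = 0` since `Q ≥ 0`: `Pv` is an
eigenvector of `C*` for `conj λ`, hence orthogonal to every eigenvector of `C` for another
eigenvalue. If the two eigenvalues of `C` differ, this makes `G = V* P V` diagonal; if they agree,
`C` is scalar and `V` may be replaced by a unitary matrix diagonalizing `P`. Either way
`P = (V⁻¹)* G V⁻¹ = ∑ⱼ Gⱼⱼ wⱼ wⱼ*`, where the columns `wⱼ` of `(V⁻¹)*` are eigenvectors of
`C* = (V⁻¹)* D* V*`; it remains to normalize them.
-/

open Matrix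
open scoped ComplexOrder

namespace Matrix

variable {n : Type*} [Fintype n]

theorem conjTranspose_mul_mul_apply {R : Type*} [Semiring R] [StarRing R] (V P : Matrix n n R)
    (k j : n) : (Vᴴ * P * V) k j = star (V.col k) ⬝ᵥ P *ᵥ V.col j := by
  simp only [mul_apply, dotProduct, mulVec, conjTranspose_apply, Pi.star_apply, col_apply,
    Finset.mul_sum, Finset.sum_mul, mul_assoc]
  exact Finset.sum_comm

theorem star_dotProduct_conjTranspose_mulVec {R : Type*} [CommSemiring R] [StarRing R]
    {C : Matrix n n R} {x : n → R} {d : R} (hx : C *ᵥ x = d • x) (y : n → R) :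
    star x ⬝ᵥ Cᴴ *ᵥ y = star d * (star x ⬝ᵥ y) := by
  rw [dotProduct_mulVec, ← star_mulVec, hx, star_smul, smul_dotProduct, smul_eq_mul]

theorem star_dotProduct_eq_zero_of_eigenvalue_ne {C : Matrix n n ℂ} {x y : n → ℂ} {d a : ℂ}
    (hx : C *ᵥ x = d • x) (hy : Cᴴ *ᵥ y = starRingEnd ℂ a • y) (hda : d ≠ a) :
    star x ⬝ᵥ y = 0 := by
  have h := star_dotProduct_conjTranspose_mulVec hx y
  rw [hy, dotProduct_smul, smul_eq_mul] at h
  by_contra hxy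
  exact hda (by simpa using congrArg (starRingEnd ℂ) (mul_right_cancel₀ hxy h).symm)

theorem conjTranspose_mulVec_mulVec_eq_of_posSemidef {C P : Matrix n n ℂ} {μ : ℝ}
    (hQ : (Cᴴ * P + P * C - ((2 * μ : ℝ) : ℂ) • P).PosSemidef) {lam : ℂ} (hlam : lam.re = μ)
    {v : n → ℂ} (hv : C *ᵥ v = lam • v) :
    Cᴴ *ᵥ (P *ᵥ v) = starRingEnd ℂ lam • P *ᵥ v := by
  have hconj : starRingEnd ℂ lam = ((2 * μ : ℝ) : ℂ) - lam := by
    apply Complex.ext <;> simp [← hlam]; ring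
  have hQv : (Cᴴ * P + P * C - ((2 * μ : ℝ) : ℂ) • P) *ᵥ v
      = Cᴴ *ᵥ (P *ᵥ v) - starRingEnd ℂ lam • P *ᵥ v := by
    rw [sub_mulVec, add_mulVec, ← mulVec_mulVec, ← mulVec_mulVec, hv, mulVec_smul, smul_mulVec,
      hconj, sub_smul]
    abel
  have hform : star v ⬝ᵥ (Cᴴ * P + P * C - ((2 * μ : ℝ) : ℂ) • P) *ᵥ v = 0 := by
    rw [hQv, dotProduct_sub, star_dotProduct_conjTranspose_mulVec hv, dotProduct_smul,
      smul_eq_mul, Complex.star_def, sub_self]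
  rw [← sub_eq_zero, ← hQv]
  exact (hQ.dotProduct_mulVec_zero_iff v).mp hform

theorem exists_pos_sum_norm_sq_inv_smul_eq_one {w : n → ℂ} (hw : w ≠ 0) :
    ∃ r : ℝ, 0 < r ∧ ∑ i, ‖((r : ℂ)⁻¹ • w) i‖ ^ 2 = 1 := by
  have hnorm (u : n → ℂ) : ∑ i, ‖u i‖ ^ 2 = ‖WithLp.toLp 2 u‖ ^ 2 :=
    (EuclideanSpace.norm_sq_eq (WithLp.toLp 2 u)).symm
  have hr : 0 < ‖WithLp.toLp 2 w‖ := norm_pos_iff.mpr (by simpa using hw)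
  refine ⟨‖WithLp.toLp 2 w‖, hr, ?_⟩
  rw [hnorm, WithLp.toLp_smul, norm_smul, norm_inv, Complex.norm_real, Real.norm_eq_abs,
    abs_of_pos hr, inv_mul_cancel₀ hr.ne', one_pow]

theorem vecMulVec_self_eq_sq_smul (w : n → ℂ) {r : ℝ} (hr : r ≠ 0) :
    vecMulVec w (star w) =
      ((r ^ 2 : ℝ) : ℂ) • vecMulVec ((r : ℂ)⁻¹ • w) (star ((r : ℂ)⁻¹ • w)) := by
  have hr' : (r : ℂ) ≠ 0 := by exact_mod_cast hr
  ext i k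
  simp only [vecMulVec_apply, smul_apply, Pi.smul_apply, Pi.star_apply, star_smul, smul_eq_mul,
    Complex.star_def, map_inv₀, Complex.conj_ofReal]
  push_cast
  field_simp

variable [DecidableEq n]

section Field

variable {K : Type*} [Field K] {V D : Matrix n n K}

theorem exists_diag_eq_of_mulVec_eq_smul (hV : IsUnit V.det) (hD : D.IsDiag) {v : n → K}
    {lam : K} (hv0 : v ≠ 0) (hv : (V * D * V⁻¹) *ᵥ v = lam • v) : ∃ j, D j j = lam := by
  have hDu : D *ᵥ (V⁻¹ *ᵥ v) = lam • (V⁻¹ *ᵥ v) := by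
    rw [← mulVec_smul, ← hv, mulVec_mulVec, mulVec_mulVec, ← Matrix.mul_assoc,
      ← Matrix.mul_assoc, nonsing_inv_mul _ hV, Matrix.one_mul]
  obtain ⟨j, hj⟩ : ∃ j, (V⁻¹ *ᵥ v) j ≠ 0 := by
    by_contra! h
    have hu : V⁻¹ *ᵥ v = 0 := funext h
    exact hv0 (by rw [← one_mulVec v, ← mul_nonsing_inv _ hV, ← mulVec_mulVec, hu, mulVec_zero])
  refine ⟨j, mul_right_cancel₀ hj ?_⟩
  have := congrFun hDu j
  rwa [← hD.diagonal_diag, mulVec_diagonal] at this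

theorem mulVec_single_one_of_isDiag (hD : D.IsDiag) (j : n) :
    D *ᵥ Pi.single j 1 = D j j • Pi.single j 1 := by
  ext i
  rcases eq_or_ne i j with rfl | hij
  · simp
  · simp [hij, hD hij]

theorem mulVec_col_eq_smul (hV : IsUnit V.det) (hD : D.IsDiag) (j : n) :
    (V * D * V⁻¹) *ᵥ V.col j = D j j • V.col j := by
  rw [← mulVec_single_one, mulVec_mulVec, Matrix.mul_assoc (V * D), nonsing_inv_mul _ hV,
    Matrix.mul_one, ← mulVec_mulVec, mulVec_single_one_of_isDiag hD, mulVec_smul]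

theorem col_ne_zero_of_isUnit (hV : IsUnit V.det) (j : n) : V.col j ≠ 0 := by
  rw [← mulVec_single_one]
  intro h
  have := mulVec_injective_of_isUnit ((isUnit_iff_isUnit_det V).mpr hV)
    (h.trans (mulVec_zero V).symm)
  simpa using congrFun this j

theorem mul_smul_one_mul_inv (hV : IsUnit V.det) (d : K) : V * (d • 1) * V⁻¹ = d • 1 := by
  rw [Matrix.mul_smul, Matrix.mul_one, Matrix.smul_mul, mul_nonsing_inv _ hV]

end Field

theorem mul_diagonal_mul_conjTranspose {R : Type*} [CommSemiring R] [StarRing R]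
    (W : Matrix n n R) (g : n → R) :
    W * diagonal g * Wᴴ = ∑ j, g j • vecMulVec (W.col j) (star (W.col j)) := by
  ext i k
  simp only [mul_apply, conjTranspose_apply, sum_apply, smul_apply, vecMulVec_apply,
    col_apply, Pi.star_apply, smul_eq_mul, diagonal_apply, mul_ite, mul_zero, Finset.sum_ite_eq',
    Finset.mem_univ, if_true]
  exact Finset.sum_congr rfl fun j _ => by ring

theorem conjTranspose_mul_mul_inv {V D : Matrix n n ℂ} (hV : IsUnit V.det) :
    (V * D * V⁻¹)ᴴ = (V⁻¹)ᴴ * Dᴴ * ((V⁻¹)ᴴ)⁻¹ := by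
  have hVH : IsUnit Vᴴ.det := by simpa [det_conjTranspose] using hV.star
  rw [conjTranspose_nonsing_inv, nonsing_inv_nonsing_inv _ hVH, conjTranspose_mul,
    conjTranspose_mul, Matrix.mul_assoc, conjTranspose_nonsing_inv]

theorem exists_unit_eigenvector_decomposition {A P W : Matrix n n ℂ} {c : n → ℂ} (hW : IsUnit W.det)
    (hA : ∀ j, A *ᵥ W.col j = c j • W.col j) {g : n → ℝ} (hg : ∀ j, 0 < g j)
    (hP : P = W * diagonal (fun j => (g j : ℂ)) * Wᴴ) :
    ∃ (w : n → n → ℂ) (b : n → ℝ) (lam : n → ℂ),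
      (∀ j, 0 < b j) ∧ (∀ j, ∑ i, ‖w j i‖ ^ 2 = 1) ∧ (∀ j, w j ≠ 0) ∧
      (∀ j, A *ᵥ w j = starRingEnd ℂ (lam j) • w j) ∧
      P = ∑ j, (b j : ℂ) • vecMulVec (w j) (star (w j)) := by
  choose r hr hunit using fun j =>
    exists_pos_sum_norm_sq_inv_smul_eq_one (col_ne_zero_of_isUnit hW j)
  refine ⟨fun j => (r j : ℂ)⁻¹ • W.col j, fun j => g j * r j ^ 2, fun j => star (c j),
    fun j => mul_pos (hg j) (pow_pos (hr j) 2), hunit,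
    fun j => smul_ne_zero (by exact_mod_cast (inv_pos.mpr (hr j)).ne') (col_ne_zero_of_isUnit hW j),
    fun j => ?_, ?_⟩
  · rw [mulVec_smul, hA, smul_comm, Complex.star_def, Complex.conj_conj]
  · rw [hP, mul_diagonal_mul_conjTranspose]
    refine Finset.sum_congr rfl fun j _ => ?_
    rw [vecMulVec_self_eq_sq_smul _ (hr j).ne', smul_smul]
    push_cast
    rfl

theorem exists_pos_eq_mul_diagonal_mul_conjTranspose {P V : Matrix n n ℂ} (hV : IsUnit V.det)
    (hP : P.PosDef) (hG : (Vᴴ * P * V).IsDiag) :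
    ∃ g : n → ℝ, (∀ j, 0 < g j) ∧ P = (V⁻¹)ᴴ * diagonal (fun j => (g j : ℂ)) * V⁻¹ := by
  have hGpos := hP.conjTranspose_mul_mul_same (mulVec_injective_of_isUnit
    ((isUnit_iff_isUnit_det V).mpr hV))
  choose g hg hgG using fun j => RCLike.pos_iff_exists_ofReal.mp (hGpos.diag_pos (i := j))
  refine ⟨g, hg, ?_⟩
  have hdiag : diagonal (fun j => (g j : ℂ)) = Vᴴ * P * V := by
    rw [← hG.diagonal_diag]
    exact congrArg diagonal (funext hgG)
  rw [hdiag, ← Matrix.mul_assoc, ← Matrix.mul_assoc, ← conjTranspose_mul, mul_nonsing_inv _ hV,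
    conjTranspose_one, Matrix.one_mul, Matrix.mul_assoc, mul_nonsing_inv _ hV, Matrix.mul_one]

theorem exists_eigenbasis_isDiag_of_eq_smul_one {C P : Matrix n n ℂ} {d : ℂ} (hC : C = d • 1)
    (hP : P.IsHermitian) :
    ∃ V D : Matrix n n ℂ, IsUnit V.det ∧ D.IsDiag ∧ C = V * D * V⁻¹ ∧ (Vᴴ * P * V).IsDiag := by
  have hU := UnitaryGroup.det_isUnit hP.eigenvectorUnitary
  refine ⟨hP.eigenvectorUnitary, d • 1, hU, isDiag_one.smul d,
    by rw [mul_smul_one_mul_inv hU, hC], ?_⟩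
  have := hP.conjStarAlgAut_star_eigenvectorUnitary
  rw [Unitary.conjStarAlgAut_apply, Unitary.coe_star, star_star, star_eq_conjTranspose] at this
  rw [this]
  exact isDiag_diagonal _

theorem isDiag_conjTranspose_mul_mul_of_ne {C P V D : Matrix (Fin 2) (Fin 2) ℂ} {μ : ℝ}
    (hV : IsUnit V.det) (hD : D.IsDiag) (hC : C = V * D * V⁻¹) (hD01 : D 0 0 ≠ D 1 1)
    {lam : ℂ} {v : Fin 2 → ℂ} (hv0 : v ≠ 0) (hv : C *ᵥ v = lam • v) (hlam : lam.re = μ)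
    (hP : P.IsHermitian) (hQ : (Cᴴ * P + P * C - ((2 * μ : ℝ) : ℂ) • P).PosSemidef) :
    (Vᴴ * P * V).IsDiag := by
  subst hC
  obtain ⟨j, rfl⟩ := exists_diag_eq_of_mulVec_eq_smul hV hD hv0 hv
  have hPcol := conjTranspose_mulVec_mulVec_eq_of_posSemidef hQ hlam (mulVec_col_eq_smul hV hD j)
  have hoff : ∀ k, k ≠ j → (Vᴴ * P * V) k j = 0 := by
    intro k hk
    have hne : D k k ≠ D j j := by
      fin_cases j <;> fin_cases k <;> first | exact absurd rfl hk | exact hD01 | exact hD01.symm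
    rw [conjTranspose_mul_mul_apply]
    exact star_dotProduct_eq_zero_of_eigenvalue_ne (mulVec_col_eq_smul hV hD k) hPcol hne
  intro a b hab
  rcases eq_or_ne b j with rfl | hbj
  · exact hoff a hab
  · have haj : a = j := by omega
    subst haj
    rw [← (isHermitian_conjTranspose_mul_mul V hP).apply, hoff b hbj, star_zero]

theorem exists_eigenbasis_isDiag_conjTranspose_mul_mul {C P : Matrix (Fin 2) (Fin 2) ℂ} {μ : ℝ}
    (hdiag : ∃ V D : Matrix (Fin 2) (Fin 2) ℂ, IsUnit V.det ∧ D.IsDiag ∧ C = V * D * V⁻¹)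
    {lam : ℂ} {v : Fin 2 → ℂ} (hv0 : v ≠ 0) (hv : C *ᵥ v = lam • v) (hlam : lam.re = μ)
    (hP : P.IsHermitian) (hQ : (Cᴴ * P + P * C - ((2 * μ : ℝ) : ℂ) • P).PosSemidef) :
    ∃ V D : Matrix (Fin 2) (Fin 2) ℂ,
      IsUnit V.det ∧ D.IsDiag ∧ C = V * D * V⁻¹ ∧ (Vᴴ * P * V).IsDiag := by
  obtain ⟨V, D, hV, hD, hC⟩ := hdiag
  by_cases hD01 : D 0 0 = D 1 1
  · have hDscalar : D = D 0 0 • 1 := by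
      ext i j
      fin_cases i <;> fin_cases j <;> simp [hD01, hD (by decide : (0 : Fin 2) ≠ 1),
        hD (by decide : (1 : Fin 2) ≠ 0)]
    rw [hDscalar, mul_smul_one_mul_inv hV] at hC
    exact exists_eigenbasis_isDiag_of_eq_smul_one hC hP
  · exact ⟨V, D, hV, hD, hC, isDiag_conjTranspose_mul_mul_of_ne hV hD hC hD01 hv0 hv hlam hP hQ⟩

end Matrix

theorem stmt0_general (C : Matrix (Fin 2) (Fin 2) ℂ) (μ : ℝ)
    (hdiag : ∃ V D : Matrix (Fin 2) (Fin 2) ℂ, IsUnit V.det ∧ D.IsDiag ∧ C = V * D * V⁻¹)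
    (hμ2 : ∃ lam : ℂ, (∃ v : Fin 2 → ℂ, v ≠ 0 ∧ C.mulVec v = lam • v) ∧ lam.re = μ)
    (P : Matrix (Fin 2) (Fin 2) ℂ) (hP : P.PosDef)
    (hineq : (Cᴴ * P + P * C - ((2 * μ : ℝ) : ℂ) • P).PosSemidef) :
    ∃ (w : Fin 2 → Fin 2 → ℂ) (b : Fin 2 → ℝ) (lam : Fin 2 → ℂ),
      (∀ j, 0 < b j) ∧ (∀ j, ∑ i, ‖w j i‖ ^ 2 = 1) ∧ (∀ j, w j ≠ 0) ∧
      (∀ j, Cᴴ.mulVec (w j) = (starRingEnd ℂ) (lam j) • w j) ∧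
      P = ∑ j, (b j : ℂ) • vecMulVec (w j) (star (w j)) := by
  obtain ⟨lam, ⟨v, hv0, hv⟩, hlam⟩ := hμ2
  obtain ⟨V, D, hV, hD, hC, hG⟩ :=
    exists_eigenbasis_isDiag_conjTranspose_mul_mul hdiag hv0 hv hlam hP.1 hineq
  obtain ⟨g, hg, hPg⟩ := exists_pos_eq_mul_diagonal_mul_conjTranspose hV hP hG
  have hW : IsUnit ((V⁻¹)ᴴ).det := by
    simpa [det_conjTranspose] using (isUnit_nonsing_inv_det V hV).star
  refine exists_unit_eigenvector_decomposition (c := fun j => star (D j j)) hW (fun j => ?_) hg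
    (by rwa [conjTranspose_conjTranspose])
  rw [hC, conjTranspose_mul_mul_inv hV]
  exact mulVec_col_eq_smul hW hD.conjTranspose j

theorem stmt0 (C : Matrix (Fin 2) (Fin 2) ℂ) (μ : ℝ)
    (hdiag : ∃ V D : Matrix (Fin 2) (Fin 2) ℂ, IsUnit V.det ∧ D.IsDiag ∧ C = V * D * V⁻¹)
    (hstable : ∀ lam : ℂ, (∃ v : Fin 2 → ℂ, v ≠ 0 ∧ C.mulVec v = lam • v) → 0 < lam.re)
    (hμ1 : ∀ lam : ℂ, (∃ v : Fin 2 → ℂ, v ≠ 0 ∧ C.mulVec v = lam • v) → μ ≤ lam.re)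
    (hμ2 : ∃ lam : ℂ, (∃ v : Fin 2 → ℂ, v ≠ 0 ∧ C.mulVec v = lam • v) ∧ lam.re = μ)
    (P : Matrix (Fin 2) (Fin 2) ℂ) (hP : P.PosDef)
    (hineq : (Cᴴ * P + P * C - ((2 * μ : ℝ) : ℂ) • P).PosSemidef) :
    ∃ (w : Fin 2 → Fin 2 → ℂ) (b : Fin 2 → ℝ) (lam : Fin 2 → ℂ),
      (∀ j, 0 < b j) ∧ (∀ j, ∑ i, ‖w j i‖ ^ 2 = 1) ∧ (∀ j, w j ≠ 0) ∧
      (∀ j, Cᴴ.mulVec (w j) = (starRingEnd ℂ) (lam j) • w j) ∧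
      P = ∑ j, (b j : ℂ) • vecMulVec (w j) (star (w j)) :=
  stmt0_general C μ hdiag hμ2 P hP hineq
end

section
/- Let C be an n×n complex matrix all of whose eigenvalues are non-defective (geometric multiplicity equals algebraic multiplicity), and let μ = min{Re λ : λ eigenvalue of C}. Let w₁,…,wₙ be normalized (right) eigenvectors of C* forming a basis of ℂⁿ, and let b₁,…,bₙ > 0. Then P := Σⱼ bⱼ wⱼwⱼ* is a positive definite Hermitian matrix satisfying C*P + PC ≥ 2μP. -/
open Matrix Complex Finset
open scoped ComplexOrder

/-!
Since `wⱼᴴ C = λⱼ wⱼᴴ`, each rank-one matrix `wⱼ wⱼᴴ` satisfies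
`Cᴴ (wⱼ wⱼᴴ) + (wⱼ wⱼᴴ) C = 2 Re λⱼ · wⱼ wⱼᴴ`, so `Cᴴ P + P C - 2μ P = ∑ⱼ bⱼ (2 Re λⱼ - 2μ) wⱼ wⱼᴴ`
is a nonnegative combination of positive semidefinite matrices. Positive definiteness of `P` comes
from writing it as `W diag(b) Wᴴ` with `W` the invertible matrix whose columns are the `wⱼ`.
-/

namespace Matrix

variable {ι : Type*} [Fintype ι]

theorem conjTranspose_mul_vecMulVec_add_vecMulVec_mul {C : Matrix ι ι ℂ} {w : ι → ℂ} {lam : ℂ}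
    (hw : Cᴴ *ᵥ w = starRingEnd ℂ lam • w) :
    Cᴴ * vecMulVec w (star w) + vecMulVec w (star w) * C
      = ((2 * lam.re : ℝ) : ℂ) • vecMulVec w (star w) := by
  have hw' : star w ᵥ* C = lam • star w := by
    simpa [star_mulVec] using congrArg star hw
  rw [mul_vecMulVec, vecMulVec_mul, hw, hw', smul_vecMulVec, vecMulVec_smul, ← add_smul,
    add_comm, Complex.add_conj]

theorem posSemidef_conjTranspose_mul_add_mul_sub_smul_sum_vecMulVec {C : Matrix ι ι ℂ}
    {w : ι → ι → ℂ} {lam : ι → ℂ} (heig : ∀ j, Cᴴ *ᵥ w j = starRingEnd ℂ (lam j) • w j)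
    {b : ι → ℝ} (hb : ∀ j, 0 ≤ b j) {μ : ℝ} (hμ : ∀ j, μ ≤ (lam j).re) :
    (Cᴴ * (∑ j, (b j : ℂ) • vecMulVec (w j) (star (w j))) +
        (∑ j, (b j : ℂ) • vecMulVec (w j) (star (w j))) * C -
        ((2 * μ : ℝ) : ℂ) • ∑ j, (b j : ℂ) • vecMulVec (w j) (star (w j))).PosSemidef := by
  set P := ∑ j, (b j : ℂ) • vecMulVec (w j) (star (w j)) with hP
  have hsum : Cᴴ * P + P * C - ((2 * μ : ℝ) : ℂ) • P
      = ∑ j, ((b j * (2 * (lam j).re - 2 * μ) : ℝ) : ℂ) • vecMulVec (w j) (star (w j)) := by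
    rw [hP, Finset.mul_sum, Finset.sum_mul, Finset.smul_sum, ← Finset.sum_add_distrib,
      ← Finset.sum_sub_distrib]
    refine Finset.sum_congr rfl fun j _ => ?_
    rw [Matrix.mul_smul, Matrix.smul_mul, ← smul_add,
      conjTranspose_mul_vecMulVec_add_vecMulVec_mul (heig j), smul_smul, smul_smul, ← sub_smul]
    push_cast
    ring_nf
  rw [hsum]
  refine posSemidef_sum _ fun j _ => (posSemidef_vecMulVec_self_star _).smul ?_
  exact Complex.zero_le_real.mpr (mul_nonneg (hb j) (by linarith [hμ j]))

variable [DecidableEq ι]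

theorem sum_smul_vecMulVec_eq_mul_diagonal_mul_conjTranspose (w : ι → ι → ℂ) (b : ι → ℂ) :
    ∑ j, b j • vecMulVec (w j) (star (w j)) = (of w)ᵀ * diagonal b * ((of w)ᵀ)ᴴ := by
  ext i k
  rw [mul_apply]
  simp [mul_diagonal, sum_apply, vecMulVec_apply, mul_left_comm, mul_assoc]

theorem posDef_sum_smul_vecMulVec {w : ι → ι → ℂ} (hw : LinearIndependent ℂ w) {b : ι → ℝ}
    (hb : ∀ j, 0 < b j) : (∑ j, (b j : ℂ) • vecMulVec (w j) (star (w j))).PosDef := by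
  rw [sum_smul_vecMulVec_eq_mul_diagonal_mul_conjTranspose]
  refine (PosDef.diagonal fun j => ?_).mul_mul_conjTranspose_same ?_
  · exact_mod_cast hb j
  · have : IsUnit (of w) := linearIndependent_rows_iff_isUnit.mp hw
    simpa [Function.Injective, vecMul_transpose] using mulVec_injective_iff_isUnit.mpr this

end Matrix

theorem stmt1_general (n : ℕ) (C : Matrix (Fin n) (Fin n) ℂ) (μ : ℝ)
    (hμ1 : ∀ lam : ℂ, (∃ v : Fin n → ℂ, v ≠ 0 ∧ C.mulVec v = lam • v) → μ ≤ lam.re)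
    (w : Fin n → Fin n → ℂ) (lam : Fin n → ℂ)
    (heig : ∀ j, Cᴴ.mulVec (w j) = (starRingEnd ℂ) (lam j) • w j)
    (heiglam : ∀ j, ∃ v : Fin n → ℂ, v ≠ 0 ∧ C.mulVec v = lam j • v)
    (hbasis : LinearIndependent ℂ w)
    (b : Fin n → ℝ) (hb : ∀ j, 0 < b j) :
    (∑ j, (b j : ℂ) • vecMulVec (w j) (star (w j))).PosDef ∧
    (Cᴴ * (∑ j, (b j : ℂ) • vecMulVec (w j) (star (w j))) +
        (∑ j, (b j : ℂ) • vecMulVec (w j) (star (w j))) * C -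
        ((2 * μ : ℝ) : ℂ) • ∑ j, (b j : ℂ) • vecMulVec (w j) (star (w j))).PosSemidef :=
  ⟨posDef_sum_smul_vecMulVec hbasis hb,
    posSemidef_conjTranspose_mul_add_mul_sub_smul_sum_vecMulVec heig (fun j => (hb j).le)
      fun j => hμ1 (lam j) (heiglam j)⟩

theorem stmt1 (n : ℕ) (C : Matrix (Fin n) (Fin n) ℂ) (μ : ℝ)
    (hμ1 : ∀ lam : ℂ, (∃ v : Fin n → ℂ, v ≠ 0 ∧ C.mulVec v = lam • v) → μ ≤ lam.re)
    (hμ2 : ∃ lam : ℂ, (∃ v : Fin n → ℂ, v ≠ 0 ∧ C.mulVec v = lam • v) ∧ lam.re = μ)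
    (w : Fin n → Fin n → ℂ) (lam : Fin n → ℂ)
    (hnorm : ∀ j, ∑ i, ‖w j i‖ ^ 2 = 1)
    (heig : ∀ j, Cᴴ.mulVec (w j) = (starRingEnd ℂ) (lam j) • w j)
    (heiglam : ∀ j, ∃ v : Fin n → ℂ, v ≠ 0 ∧ C.mulVec v = lam j • v)
    (hbasis : LinearIndependent ℂ w)
    (b : Fin n → ℝ) (hb : ∀ j, 0 < b j) :
    (∑ j, (b j : ℂ) • vecMulVec (w j) (star (w j))).PosDef ∧
    (Cᴴ * (∑ j, (b j : ℂ) • vecMulVec (w j) (star (w j))) +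
        (∑ j, (b j : ℂ) • vecMulVec (w j) (star (w j))) * C -
        ((2 * μ : ℝ) : ℂ) • ∑ j, (b j : ℂ) • vecMulVec (w j) (star (w j))).PosSemidef :=
  stmt1_general n C μ hμ1 w lam heig heiglam hbasis b hb
end

section
/- Let C be an n×n positive stable complex matrix, μ = min{Re λ : λ eigenvalue of C}, and let P be a positive definite Hermitian matrix with C*P + PC ≥ 2μP. Let λmin and λmax be the smallest and largest eigenvalues of P and κ(P) = λmax/λmin its condition number. Then every solution of f' = −Cf satisfies ‖f(t)‖₂² ≤ κ(P) e^{−2μt} ‖f(0)‖₂² for all t ≥ 0. -/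
/-!
`V(t) = f(t)* P f(t)` is a Lyapunov function: along solutions `V' = -f* (C* P + P C) f ≤ -2μ V`,
so Grönwall gives `V(t) ≤ e^{-2μt} V(0)`. Since `P - λmin I` and `λmax I - P` are positive
semidefinite, `λmin ‖x‖² ≤ x* P x ≤ λmax ‖x‖²`, which converts the decay of `V` into the claim.
-/

open Matrix
open scoped ComplexOrder

lemma le_mul_exp_of_hasDerivAt_le {V V' : ℝ → ℝ} {K : ℝ} (hV : ∀ t, HasDerivAt V (V' t) t)
    (hV' : ∀ t, V' t ≤ K * V t) {t : ℝ} (ht : 0 ≤ t) : V t ≤ V 0 * Real.exp (K * t) := by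
  have := le_gronwallBound_of_liminf_deriv_right_le
    (fun x _ => (hV x).continuousAt.continuousWithinAt)
    (fun x _ _ hr => (hV x).hasDerivWithinAt.liminf_right_slope_le hr) le_rfl
    (fun x _ => (hV' x).trans (le_add_of_nonneg_right le_rfl)) t ⟨ht, le_rfl⟩
  rwa [gronwallBound_ε0, sub_zero] at this

namespace Matrix

variable {n 𝕜 : Type*} [Fintype n] [RCLike 𝕜]

def realEigenvalues (A : Matrix n n 𝕜) : Set ℝ :=
  {l | ∃ v : n → 𝕜, v ≠ 0 ∧ A *ᵥ v = (l : 𝕜) • v}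

lemma re_star_dotProduct_self (v : n → 𝕜) : RCLike.re (star v ⬝ᵥ v) = ∑ i, ‖v i‖ ^ 2 := by
  simp only [dotProduct, Pi.star_apply, RCLike.star_def, RCLike.conj_mul, map_sum]
  norm_cast

lemma re_dotProduct_mulVec_le_of_posSemidef_sub {A B : Matrix n n 𝕜} (h : (A - B).PosSemidef)
    (v : n → 𝕜) : RCLike.re (star v ⬝ᵥ B *ᵥ v) ≤ RCLike.re (star v ⬝ᵥ A *ᵥ v) := by
  have := h.re_dotProduct_nonneg v
  rwa [sub_mulVec, dotProduct_sub, map_sub, sub_nonneg] at this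

lemma IsHermitian.eigenvalues_mem_realEigenvalues [DecidableEq n] {A : Matrix n n 𝕜}
    (hA : A.IsHermitian) (i : n) : hA.eigenvalues i ∈ A.realEigenvalues := by
  refine ⟨_, fun h => hA.eigenvectorBasis.orthonormal.ne_zero i (WithLp.ofLp_injective 2 h), ?_⟩
  rw [hA.mulVec_eigenvectorBasis i, RCLike.real_smul_eq_coe_smul (K := 𝕜)]

lemma add_mem_realEigenvalues_of_mem_sub_smul_one [DecidableEq n] {A : Matrix n n 𝕜} {c l : ℝ}
    (h : l ∈ (A - c • (1 : Matrix n n 𝕜)).realEigenvalues) : l + c ∈ A.realEigenvalues := by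
  obtain ⟨v, hv, hAv⟩ := h
  refine ⟨v, hv, ?_⟩
  rw [sub_mulVec, smul_mulVec, one_mulVec, sub_eq_iff_eq_add] at hAv
  rw [hAv, RCLike.ofReal_add, add_smul, RCLike.real_smul_eq_coe_smul (K := 𝕜)]

lemma IsHermitian.mul_norm_sq_le_re_dotProduct_mulVec {A : Matrix n n 𝕜} (hA : A.IsHermitian)
    {c : ℝ} (hc : ∀ l ∈ A.realEigenvalues, c ≤ l) (v : n → 𝕜) :
    c * ∑ i, ‖v i‖ ^ 2 ≤ RCLike.re (star v ⬝ᵥ A *ᵥ v) := by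
  classical
  have hH : (A - c • (1 : Matrix n n 𝕜)).IsHermitian :=
    hA.sub (isHermitian_one.smul (IsSelfAdjoint.all c))
  have hpsd : (A - c • (1 : Matrix n n 𝕜)).PosSemidef :=
    hH.posSemidef_iff_eigenvalues_nonneg.mpr fun i => by
      simpa using hc _
        (add_mem_realEigenvalues_of_mem_sub_smul_one (hH.eigenvalues_mem_realEigenvalues i))
  have := re_dotProduct_mulVec_le_of_posSemidef_sub hpsd v
  rwa [smul_mulVec, one_mulVec, dotProduct_smul, RCLike.smul_re, re_star_dotProduct_self] at this

lemma neg_mem_realEigenvalues_of_mem_neg {A : Matrix n n 𝕜} {l : ℝ}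
    (h : l ∈ (-A).realEigenvalues) : -l ∈ A.realEigenvalues := by
  obtain ⟨v, hv, hAv⟩ := h
  refine ⟨v, hv, ?_⟩
  rw [neg_mulVec, neg_eq_iff_eq_neg] at hAv
  rw [hAv, RCLike.ofReal_neg, neg_smul]

lemma IsHermitian.re_dotProduct_mulVec_le_mul_norm_sq {A : Matrix n n 𝕜} (hA : A.IsHermitian)
    {c : ℝ} (hc : ∀ l ∈ A.realEigenvalues, l ≤ c) (v : n → 𝕜) :
    RCLike.re (star v ⬝ᵥ A *ᵥ v) ≤ c * ∑ i, ‖v i‖ ^ 2 := by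
  have := hA.neg.mul_norm_sq_le_re_dotProduct_mulVec
    (fun l hl => neg_le.mp (hc _ (neg_mem_realEigenvalues_of_mem_neg hl))) v
  rwa [neg_mulVec, dotProduct_neg, map_neg, neg_mul, neg_le_neg_iff] at this

lemma PosDef.pos_of_mem_realEigenvalues {A : Matrix n n 𝕜} (hA : A.PosDef) {l : ℝ}
    (hl : l ∈ A.realEigenvalues) : 0 < l := by
  obtain ⟨v, hv, hAv⟩ := hl
  have hpos := hA.re_dotProduct_pos hv
  rw [hAv, dotProduct_smul, ← RCLike.real_smul_eq_coe_smul, RCLike.smul_re,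
    re_star_dotProduct_self] at hpos
  exact pos_of_mul_pos_left hpos (by positivity)

lemma hasDerivAt_dotProduct_mulVec (A : Matrix n n 𝕜) {f : ℝ → n → 𝕜} {f' : n → 𝕜} {t : ℝ}
    (hf : HasDerivAt f f' t) :
    HasDerivAt (fun s => star (f s) ⬝ᵥ A *ᵥ f s)
      (star f' ⬝ᵥ A *ᵥ f t + star (f t) ⬝ᵥ A *ᵥ f') t := by
  have hcoord : ∀ i, HasDerivAt (fun s => f s i) (f' i) t := hasDerivAt_pi.mp hf
  have hAf : ∀ i, HasDerivAt (fun s => (A *ᵥ f s) i) ((A *ᵥ f') i) t := fun i =>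
    HasDerivAt.fun_sum fun j _ => (hcoord j).const_mul (A i j)
  simp only [dotProduct, Pi.star_apply, ← Finset.sum_add_distrib]
  exact HasDerivAt.fun_sum fun i _ => (hcoord i).star.mul (hAf i)

lemma re_dotProduct_mulVec_le_exp_of_posSemidef {C P : Matrix n n 𝕜} {a : ℝ}
    (hCP : (Cᴴ * P + P * C - (a : 𝕜) • P).PosSemidef) {f : ℝ → n → 𝕜}
    (hf : ∀ t, HasDerivAt f (-(C *ᵥ f t)) t) {t : ℝ} (ht : 0 ≤ t) :
    RCLike.re (star (f t) ⬝ᵥ P *ᵥ f t) ≤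
      RCLike.re (star (f 0) ⬝ᵥ P *ᵥ f 0) * Real.exp (-a * t) := by
  have hderiv : ∀ s, star (-(C *ᵥ f s)) ⬝ᵥ P *ᵥ f s + star (f s) ⬝ᵥ P *ᵥ (-(C *ᵥ f s)) =
      -(star (f s) ⬝ᵥ (Cᴴ * P + P * C) *ᵥ f s) := fun s => by
    rw [star_neg, neg_dotProduct, mulVec_neg, dotProduct_neg, add_mulVec, dotProduct_add, neg_add,
      star_mulVec, ← dotProduct_mulVec, ← mulVec_mulVec, ← mulVec_mulVec]
  refine le_mul_exp_of_hasDerivAt_le (V := fun s => RCLike.re (star (f s) ⬝ᵥ P *ᵥ f s))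
    (fun s => RCLike.reCLM.hasFDerivAt.comp_hasDerivAt s (hasDerivAt_dotProduct_mulVec P (hf s)))
    (fun s => ?_) ht
  have := re_dotProduct_mulVec_le_of_posSemidef_sub hCP (f s)
  rw [smul_mulVec, dotProduct_smul, ← RCLike.real_smul_eq_coe_smul, RCLike.smul_re] at this
  rw [RCLike.reCLM_apply, hderiv, map_neg]
  linarith

end Matrix

theorem stmt3_general (n : ℕ) (C : Matrix (Fin n) (Fin n) ℂ) (μ : ℝ)
    (P : Matrix (Fin n) (Fin n) ℂ) (hP : P.PosDef)
    (hineq : (Cᴴ * P + P * C - ((2 * μ : ℝ) : ℂ) • P).PosSemidef)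
    (lmin lmax : ℝ)
    (hmin : IsLeast {l : ℝ | ∃ v : Fin n → ℂ, v ≠ 0 ∧ P.mulVec v = (l : ℂ) • v} lmin)
    (hmax : IsGreatest {l : ℝ | ∃ v : Fin n → ℂ, v ≠ 0 ∧ P.mulVec v = (l : ℂ) • v} lmax)
    (f : ℝ → Fin n → ℂ) (hf : ∀ t : ℝ, HasDerivAt f (-(C.mulVec (f t))) t) :
    ∀ t : ℝ, 0 ≤ t →
      ∑ i, ‖f t i‖ ^ 2 ≤ (lmax / lmin) * Real.exp (-(2 * μ) * t) * ∑ i, ‖f 0 i‖ ^ 2 := by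
  intro t ht
  have hlmin : 0 < lmin := hP.pos_of_mem_realEigenvalues hmin.1
  rw [div_mul_eq_mul_div, div_mul_eq_mul_div, le_div_iff₀ hlmin]
  calc (∑ i, ‖f t i‖ ^ 2) * lmin
      ≤ RCLike.re (star (f t) ⬝ᵥ P *ᵥ f t) := by
        rw [mul_comm]; exact hP.isHermitian.mul_norm_sq_le_re_dotProduct_mulVec hmin.2 (f t)
    _ ≤ RCLike.re (star (f 0) ⬝ᵥ P *ᵥ f 0) * Real.exp (-(2 * μ) * t) :=
        re_dotProduct_mulVec_le_exp_of_posSemidef hineq hf ht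
    _ ≤ lmax * (∑ i, ‖f 0 i‖ ^ 2) * Real.exp (-(2 * μ) * t) := by
        gcongr; exact hP.isHermitian.re_dotProduct_mulVec_le_mul_norm_sq hmax.2 (f 0)
    _ = lmax * Real.exp (-(2 * μ) * t) * ∑ i, ‖f 0 i‖ ^ 2 := by ring

theorem stmt3 (n : ℕ) (C : Matrix (Fin n) (Fin n) ℂ) (μ : ℝ)
    (hstable : ∀ lam : ℂ, (∃ v : Fin n → ℂ, v ≠ 0 ∧ C.mulVec v = lam • v) → 0 < lam.re)
    (hμ1 : ∀ lam : ℂ, (∃ v : Fin n → ℂ, v ≠ 0 ∧ C.mulVec v = lam • v) → μ ≤ lam.re)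
    (hμ2 : ∃ lam : ℂ, (∃ v : Fin n → ℂ, v ≠ 0 ∧ C.mulVec v = lam • v) ∧ lam.re = μ)
    (P : Matrix (Fin n) (Fin n) ℂ) (hP : P.PosDef)
    (hineq : (Cᴴ * P + P * C - ((2 * μ : ℝ) : ℂ) • P).PosSemidef)
    (lmin lmax : ℝ)
    (hmin : IsLeast {l : ℝ | ∃ v : Fin n → ℂ, v ≠ 0 ∧ P.mulVec v = (l : ℂ) • v} lmin)
    (hmax : IsGreatest {l : ℝ | ∃ v : Fin n → ℂ, v ≠ 0 ∧ P.mulVec v = (l : ℂ) • v} lmax)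
    (f : ℝ → Fin n → ℂ) (hf : ∀ t : ℝ, HasDerivAt f (-(C.mulVec (f t))) t) :
    ∀ t : ℝ, 0 ≤ t →
      ∑ i, ‖f t i‖ ^ 2 ≤ (lmax / lmin) * Real.exp (-(2 * μ) * t) * ∑ i, ‖f 0 i‖ ^ 2 :=
  stmt3_general n C μ P hP hineq lmin lmax hmin hmax f hf
end

section
/- Let α ∈ [0,1), W = [[1, α],[0, √(1−α²)]], and for b > 0 set P(b) = W·diag(1/b, b)·W*. Then the condition number κ(P(b)) = λmax(P(b))/λmin(P(b)) attains its unique minimum over b ∈ (0,∞) at b = 1, with minimal value (1+α)/(1−α). -/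
open Matrix Complex Finset
open scoped ComplexOrder

/-!
The eigenvalues of `P(b)` are the roots of `l² - (b + 1/b) l + (1 - α²)`, since
`tr P(b) = b + 1/b` and `det P(b) = |det W|² = 1 - α²`. For the extreme roots `m ≤ M` one has
`(M - m)² - α² (M + m)² = (1 - α²) ((M + m)² - 4)` with `M + m = b + 1/b ≥ 2`, equality only at
`b = 1`. Hence `M - m ≥ α (M + m)`, i.e. `M / m ≥ (1 + α) / (1 - α)`, with equality iff `b = 1`.
-/

namespace Matrix

variable {K : Type*} [Field K]

theorem exists_mulVec_eq_smul_iff_eval_charpoly {n : Type*} [Fintype n] [DecidableEq n]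
    (M : Matrix n n K) (l : K) :
    (∃ v, v ≠ 0 ∧ M *ᵥ v = l • v) ↔ M.charpoly.eval l = 0 := by
  rw [eval_charpoly, ← exists_mulVec_eq_zero_iff]
  refine exists_congr fun v => and_congr_right fun _ => ?_
  rw [sub_mulVec, scalar_apply, ← smul_one_eq_diagonal, smul_mulVec, one_mulVec, sub_eq_zero,
    eq_comm]

theorem exists_mulVec_eq_smul_iff_fin_two (M : Matrix (Fin 2) (Fin 2) K) (l : K) :
    (∃ v, v ≠ 0 ∧ M *ᵥ v = l • v) ↔ l ^ 2 - M.trace * l + M.det = 0 := by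
  rw [exists_mulVec_eq_smul_iff_eval_charpoly, charpoly_fin_two]
  simp

end Matrix

noncomputable def gramFactor (α : ℝ) : Matrix (Fin 2) (Fin 2) ℂ :=
  !![1, (α : ℂ); 0, (Real.sqrt (1 - α ^ 2) : ℂ)]

noncomputable def scaledGram (α b : ℝ) : Matrix (Fin 2) (Fin 2) ℂ :=
  gramFactor α * diagonal ![(1 / b : ℂ), (b : ℂ)] * (gramFactor α)ᴴ

section scaledGram

variable {α : ℝ} (hα : α ^ 2 ≤ 1)
include hα

theorem sq_sqrt_one_sub_sq_ofReal : ((Real.sqrt (1 - α ^ 2) : ℂ)) ^ 2 = 1 - (α : ℂ) ^ 2 := by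
  exact_mod_cast Real.sq_sqrt (sub_nonneg.mpr hα)

theorem trace_scaledGram (b : ℝ) : (scaledGram α b).trace = ((b + 1 / b : ℝ) : ℂ) := by
  simp only [scaledGram, gramFactor, trace_fin_two, mul_apply, Fin.sum_univ_two,
    conjTranspose_apply, diagonal_apply]
  simp only [Fin.isValue, of_apply, cons_val', cons_val_zero, cons_val_fin_one, ↓reduceIte,
    one_div, one_mul, cons_val_one, one_ne_zero, mul_zero, add_zero, star_one, mul_one,
    zero_ne_one, zero_add, RCLike.star_def, conj_ofReal, zero_mul, star_zero, ofReal_add,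
    ofReal_inv]
  linear_combination b * sq_sqrt_one_sub_sq_ofReal hα

theorem det_scaledGram {b : ℝ} (hb : b ≠ 0) : (scaledGram α b).det = ((1 - α ^ 2 : ℝ) : ℂ) := by
  rw [scaledGram, det_mul, det_mul, det_conjTranspose, det_diagonal, gramFactor, det_fin_two_of]
  simp only [one_mul, mul_zero, sub_zero, one_div, Fin.prod_univ_two, cons_val_zero,
    cons_val_one, cons_val_fin_one, inv_mul_cancel₀ (ofReal_ne_zero.mpr hb), mul_one,
    RCLike.star_def, conj_ofReal, ofReal_sub, ofReal_one, ofReal_pow]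
  linear_combination sq_sqrt_one_sub_sq_ofReal hα

theorem setOf_eigenvalue_scaledGram {b : ℝ} (hb : b ≠ 0) :
    {l : ℝ | ∃ v, v ≠ 0 ∧ scaledGram α b *ᵥ v = (l : ℂ) • v} =
      {l : ℝ | l ^ 2 - (b + 1 / b) * l + (1 - α ^ 2) = 0} := by
  ext l
  rw [Set.mem_ofPred_eq, exists_mulVec_eq_smul_iff_fin_two, trace_scaledGram hα,
    det_scaledGram hα hb, Set.mem_ofPred_eq]
  exact_mod_cast Iff.rfl

end scaledGram

/-- The reflection `l ↦ t - l` permutes the roots, so the extreme roots are symmetric about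
`t / 2` even when they coincide. -/
theorem add_eq_and_mul_eq_of_isLeast_of_isGreatest_roots {t D m M : ℝ}
    (hm : IsLeast {l : ℝ | l ^ 2 - t * l + D = 0} m)
    (hM : IsGreatest {l : ℝ | l ^ 2 - t * l + D = 0} M) :
    m + M = t ∧ m * M = D := by
  have reflect : ∀ l ∈ {l : ℝ | l ^ 2 - t * l + D = 0}, t - l ∈ {l : ℝ | l ^ 2 - t * l + D = 0} :=
    fun l hl => by simp only [Set.mem_ofPred_eq] at hl ⊢; linear_combination hl
  have hsum : m + M = t := by
    linarith [hm.2 (reflect M hM.1), hM.2 (reflect m hm.1)]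
  refine ⟨hsum, ?_⟩
  have hroot : m ^ 2 - t * m + D = 0 := hm.1
  rw [← hsum] at hroot
  linear_combination -hroot

theorem one_add_div_one_sub_le_div {α m M : ℝ} (hα : 0 ≤ α) (hα1 : α < 1) (hmM : m ≤ M)
    (hprod : m * M = 1 - α ^ 2) (hsum : 2 ≤ m + M) :
    (1 + α) / (1 - α) ≤ M / m ∧ (M / m = (1 + α) / (1 - α) ↔ m + M = 2) := by
  have hm : 0 < m := by nlinarith
  have h1α : 0 < 1 - α := by linarith
  have hsq_sub : (M - m) ^ 2 - (α * (m + M)) ^ 2 = (1 - α ^ 2) * ((m + M) ^ 2 - 4) := by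
    linear_combination (-4) * hprod
  have hgap : 0 ≤ (1 - α ^ 2) * ((m + M) ^ 2 - 4) := by
    apply mul_nonneg <;> nlinarith
  have hα_nonneg : 0 ≤ α * (m + M) := by positivity
  have hdiff_nonneg : 0 ≤ M - m := sub_nonneg.mpr hmM
  have hle : α * (m + M) ≤ M - m :=
    (pow_le_pow_iff_left₀ hα_nonneg hdiff_nonneg two_ne_zero).mp (by linarith)
  have heq : α * (m + M) = M - m ↔ m + M = 2 := by
    rw [← pow_left_inj₀ hα_nonneg hdiff_nonneg two_ne_zero, eq_comm, ← sub_eq_zero, hsq_sub,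
      mul_eq_zero, or_iff_right (by nlinarith)]
    constructor
    · intro h; nlinarith
    · intro h; rw [h]; norm_num
  constructor
  · rw [div_le_div_iff₀ h1α hm]
    linarith
  · rw [div_eq_div_iff hm.ne' h1α.ne', ← heq]
    constructor <;> intro h <;> linarith

theorem add_one_div_sub_two {b : ℝ} (hb : b ≠ 0) : b + 1 / b - 2 = (b - 1) ^ 2 / b := by
  field_simp
  ring

theorem two_le_add_one_div {b : ℝ} (hb : 0 < b) : 2 ≤ b + 1 / b := by
  have hsq : 0 ≤ (b - 1) ^ 2 / b := by positivity
  linarith [add_one_div_sub_two hb.ne']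

theorem add_one_div_eq_two_iff {b : ℝ} (hb : 0 < b) : b + 1 / b = 2 ↔ b = 1 := by
  rw [← sub_eq_zero, add_one_div_sub_two hb.ne', div_eq_zero_iff, or_iff_left hb.ne',
    pow_eq_zero_iff two_ne_zero, sub_eq_zero]

theorem stmt4 (α : ℝ) (hα : 0 ≤ α) (hα1 : α < 1) :
    ∀ b : ℝ, 0 < b →
      ∀ lmin lmax : ℝ,
        IsLeast {l : ℝ | ∃ v : Fin 2 → ℂ, v ≠ 0 ∧
            ((!![1, (α : ℂ); 0, (Real.sqrt (1 - α ^ 2) : ℂ)] *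
                Matrix.diagonal ![(1 / b : ℂ), (b : ℂ)] *
                (!![1, (α : ℂ); 0, (Real.sqrt (1 - α ^ 2) : ℂ)])ᴴ).mulVec v = (l : ℂ) • v)} lmin →
        IsGreatest {l : ℝ | ∃ v : Fin 2 → ℂ, v ≠ 0 ∧
            ((!![1, (α : ℂ); 0, (Real.sqrt (1 - α ^ 2) : ℂ)] *
                Matrix.diagonal ![(1 / b : ℂ), (b : ℂ)] *
                (!![1, (α : ℂ); 0, (Real.sqrt (1 - α ^ 2) : ℂ)])ᴴ).mulVec v = (l : ℂ) • v)} lmax →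
        (1 + α) / (1 - α) ≤ lmax / lmin ∧ (lmax / lmin = (1 + α) / (1 - α) ↔ b = 1) := by
  intro b hb lmin lmax hmin hmax
  have hset := setOf_eigenvalue_scaledGram (by nlinarith : α ^ 2 ≤ 1) hb.ne'
  obtain ⟨hsum, hprod⟩ :=
    add_eq_and_mul_eq_of_isLeast_of_isGreatest_roots (by rwa [← hset]) (by rwa [← hset])
  rw [← add_one_div_eq_two_iff hb, ← hsum]
  exact one_add_div_one_sub_le_div hα hα1 (hmin.2 hmax.1) hprod (hsum ▸ two_le_add_one_div hb)
end

section
/- Let D = diag(λ₁, λ₂) with Re λ₁ = μ ≤ Re λ₂ and λ₁ ≠ λ₂, and let B = [[b₁, β],[conj(β), b₂]] be positive definite Hermitian. Then (D* − μI)B + B(D − μI) ≥ 0 if and only if β = 0. -/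
open Matrix Complex Finset
open scoped ComplexOrder

theorem stmt6 (lam1 lam2 : ℂ) (μ : ℝ) (hne : lam1 ≠ lam2)
    (hμ : lam1.re = μ) (hle : lam1.re ≤ lam2.re)
    (b1 b2 : ℝ) (β : ℂ) (hb1 : 0 < b1) (hb2 : 0 < b2)
    (hβ : Complex.normSq β < b1 * b2) :
    (((Matrix.diagonal ![lam1, lam2])ᴴ - (μ : ℂ) • (1 : Matrix (Fin 2) (Fin 2) ℂ)) *
          !![(b1 : ℂ), β; (starRingEnd ℂ) β, (b2 : ℂ)] +
        !![(b1 : ℂ), β; (starRingEnd ℂ) β, (b2 : ℂ)] *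
          (Matrix.diagonal ![lam1, lam2] - (μ : ℂ) • (1 : Matrix (Fin 2) (Fin 2) ℂ))).PosSemidef
      ↔ β = 0 := by
  set m : ℂ := β * ((starRingEnd ℂ) lam1 + lam2 - 2*μ) with hm
  have hM : (((Matrix.diagonal ![lam1, lam2])ᴴ - (μ : ℂ) • (1 : Matrix (Fin 2) (Fin 2) ℂ)) *
          !![(b1 : ℂ), β; (starRingEnd ℂ) β, (b2 : ℂ)] +
        !![(b1 : ℂ), β; (starRingEnd ℂ) β, (b2 : ℂ)] *
          (Matrix.diagonal ![lam1, lam2] - (μ : ℂ) • (1 : Matrix (Fin 2) (Fin 2) ℂ)))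
      = !![0, m; (starRingEnd ℂ) m, (((2:ℝ)*(lam2.re - μ)*b2 : ℝ) : ℂ)] := by
    have h1 : (starRingEnd ℂ) lam1 + lam1 = 2*μ := by
      rw [add_comm, Complex.add_conj, hμ]
      push_cast; ring
    have h2 : (starRingEnd ℂ) lam2 + lam2 = 2*(lam2.re:ℂ) := by
      rw [add_comm, Complex.add_conj]; push_cast; ring
    ext i j
    fin_cases i <;> fin_cases j <;>
      simp [Matrix.mul_apply, Matrix.sub_apply, Matrix.add_apply, Matrix.smul_apply,
        Matrix.one_apply, Fin.sum_univ_two, Matrix.diagonal, Matrix.vecMul,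
        dotProduct, Matrix.of_apply, hm, _root_.map_mul, map_add, map_sub, map_ofNat]
    · linear_combination (b1:ℂ) * h1
    · ring
    · ring
    · linear_combination (b2:ℂ) * h2
  rw [hM]
  constructor
  · intro h
    have hdet : (0:ℂ) ≤ (!![0, m; (starRingEnd ℂ) m, (((2:ℝ)*(lam2.re - μ)*b2 : ℝ) : ℂ)] : Matrix (Fin 2) (Fin 2) ℂ).det := by
      rw [h.1.det_eq_prod_eigenvalues]
      refine Finset.prod_nonneg fun i _ => ?_
      exact RCLike.ofReal_nonneg.mpr (h.eigenvalues_nonneg i)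
    rw [Matrix.det_fin_two_of] at hdet
    have h' : ((Complex.normSq m : ℝ) : ℂ) ≤ 0 := by
      simpa [Complex.mul_conj] using hdet
    have hns : Complex.normSq m = 0 := by
      have h'' : Complex.normSq m ≤ 0 := by exact_mod_cast h'
      linarith [Complex.normSq_nonneg m]
    have h0 : m = 0 := Complex.normSq_eq_zero.mp hns
    rcases mul_eq_zero.mp (hm ▸ h0) with hb | ht
    · exact hb
    · exfalso
      apply hne
      simp [Complex.ext_iff] at ht
      obtain ⟨ht1, ht2⟩ := ht
      apply Complex.ext <;> [skip; skip] <;> nlinarith [hμ]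
  · intro hb0
    have hm0 : m = 0 := by rw [hm, hb0, zero_mul]
    rw [hm0, map_zero]
    have hdiag : (!![0, 0; 0, (((2:ℝ)*(lam2.re - μ)*b2 : ℝ) : ℂ)] : Matrix (Fin 2) (Fin 2) ℂ)
        = Matrix.diagonal ![0, (((2:ℝ)*(lam2.re - μ)*b2 : ℝ) : ℂ)] := by
      ext i j
      fin_cases i <;> fin_cases j <;> simp [Matrix.diagonal]
    rw [hdiag]
    refine Matrix.posSemidef_diagonal_iff.mpr fun i => ?_
    fin_cases i
    · simp
    · show (0:ℂ) ≤ (((2:ℝ)*(lam2.re - μ)*b2 : ℝ) : ℂ)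
      rw [Complex.zero_le_real]
      nlinarith
end

section
/- Let C = diag(1,2,3) and let P(b₁,b₂,b₃,β) be the 3×3 real symmetric matrix with diagonal entries b₁, b₂, b₃, entries β in positions (2,3) and (3,2), and zeros elsewhere. If b₁, b₂, b₃ > 0 and 8b₂b₃ − 9β² ≥ 0, then P is positive definite and satisfies C*P + PC ≥ 2P, but P is not diagonal whenever β ≠ 0, hence not of the form Σⱼ bⱼ wⱼwⱼ* with wⱼ eigenvectors of C*. -/
open Matrix Finset

/-!
Cᵀ P + P C − 2P has entries (Cᵢ + Cⱼ − 2) Pᵢⱼ, so it has the same shape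
`!![a, 0, 0; 0, b, c; 0, c, d]` as P, with (a, b, c, d) = (0, 2b₂, 3β, 4b₃). Such a matrix is
positive (semi)definite as soon as its 2×2 block is, by completing the square. For the last
claim: if w is an eigenvector of the diagonal matrix C then w₁ w₂ = 0, because C₁₁ ≠ C₂₂ cannot
both equal its eigenvalue; hence every combination of the w wᵀ vanishes at (1, 2), where P has β.
-/

section QuadraticForm

variable {b c d : ℝ}

lemma binary_quadratic_nonneg (hb : 0 ≤ b) (hd : 0 ≤ d) (hc : c ^ 2 ≤ b * d) (y z : ℝ) :
    0 ≤ b * y ^ 2 + 2 * c * y * z + d * z ^ 2 := by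
  rcases hb.eq_or_lt with rfl | hb
  · obtain rfl : c = 0 := by nlinarith
    nlinarith [sq_nonneg z]
  refine nonneg_of_mul_nonneg_right ?_ hb
  nlinarith [sq_nonneg (b * y + c * z), sq_nonneg z]

lemma binary_quadratic_pos (hb : 0 < b) (hc : c ^ 2 < b * d) {y z : ℝ}
    (hyz : y ≠ 0 ∨ z ≠ 0) :
    0 < b * y ^ 2 + 2 * c * y * z + d * z ^ 2 := by
  refine pos_of_mul_pos_right ?_ hb.le
  have key : b * (b * y ^ 2 + 2 * c * y * z + d * z ^ 2) =
      (b * y + c * z) ^ 2 + (b * d - c ^ 2) * z ^ 2 := by ring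
  rw [key]
  rcases eq_or_ne z 0 with rfl | hz
  · have hy := hyz.resolve_right (not_not.mpr rfl)
    simpa using sq_pos_of_ne_zero (mul_ne_zero hb.ne' hy)
  · have : 0 < (b * d - c ^ 2) * z ^ 2 := mul_pos (by linarith) (by positivity)
    positivity

end QuadraticForm

section Lyapunov

variable {n R : Type*} [Fintype n] [DecidableEq n] [CommRing R]

lemma diagonal_transpose_mul_add_mul_diagonal_sub_smul_apply (v : n → R) (M : Matrix n n R)
    (μ : R) (i j : n) :
    ((diagonal v)ᵀ * M + M * diagonal v - μ • M) i j = (v i + v j - μ) * M i j := by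
  simp only [diagonal_transpose, Matrix.sub_apply, Matrix.add_apply, Matrix.smul_apply,
    diagonal_mul, mul_diagonal, smul_eq_mul]
  ring

end Lyapunov

lemma dotProduct_mulVec_fin_three_block {R : Type*} [CommRing R] (a b c d : R) (x : Fin 3 → R) :
    x ⬝ᵥ (!![a, 0, 0; 0, b, c; 0, c, d] *ᵥ x) =
      a * x 0 ^ 2 + (b * x 1 ^ 2 + 2 * c * x 1 * x 2 + d * x 2 ^ 2) := by
  simp only [dotProduct, mulVec, of_apply, cons_val', cons_val_fin_one, Fin.sum_univ_three,
    cons_val_zero, cons_val_one, Matrix.cons_val, zero_mul, add_zero, zero_add]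
  ring

lemma isHermitian_fin_three_block (a b c d : ℝ) :
    (!![a, 0, 0; 0, b, c; 0, c, d] : Matrix (Fin 3) (Fin 3) ℝ).IsHermitian := by
  ext i j
  fin_cases i <;> fin_cases j <;> rfl

lemma posSemidef_fin_three_block {a b c d : ℝ} (ha : 0 ≤ a) (hb : 0 ≤ b) (hd : 0 ≤ d)
    (hc : c ^ 2 ≤ b * d) :
    (!![a, 0, 0; 0, b, c; 0, c, d] : Matrix (Fin 3) (Fin 3) ℝ).PosSemidef := by
  refine posSemidef_iff_dotProduct_mulVec.mpr ⟨isHermitian_fin_three_block a b c d, fun x => ?_⟩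
  rw [star_trivial, dotProduct_mulVec_fin_three_block]
  have := binary_quadratic_nonneg hb hd hc (x 1) (x 2)
  positivity

lemma posDef_fin_three_block {a b c d : ℝ} (ha : 0 < a) (hb : 0 < b)
    (hc : c ^ 2 < b * d) : (!![a, 0, 0; 0, b, c; 0, c, d] : Matrix (Fin 3) (Fin 3) ℝ).PosDef := by
  refine posDef_iff_dotProduct_mulVec.mpr ⟨isHermitian_fin_three_block a b c d, fun x hx => ?_⟩
  rw [star_trivial, dotProduct_mulVec_fin_three_block]
  have hd : 0 ≤ d := by nlinarith
  by_cases h12 : x 1 = 0 ∧ x 2 = 0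
  · have h0 : x 0 ≠ 0 := fun h0 => hx (by ext i; fin_cases i <;> simp [h0, h12.1, h12.2])
    have := binary_quadratic_nonneg hb.le hd hc.le (x 1) (x 2)
    positivity
  · have := binary_quadratic_pos hb hc (not_and_or.mp h12)
    positivity

section Eigenvectors

variable {n ι R : Type*} [Fintype n] [DecidableEq n]

lemma mul_eq_zero_of_diagonal_mulVec_eq_smul [Ring R] [NoZeroDivisors R] {v w : n → R} {lam : R}
    (hw : diagonal v *ᵥ w = lam • w) {i k : n} (hik : v i ≠ v k) : w i * w k = 0 := by
  have eigen (l : n) : (v l - lam) * w l = 0 := by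
    have := congrFun hw l
    rw [mulVec_diagonal, Pi.smul_apply, smul_eq_mul] at this
    rw [sub_mul, this, sub_self]
  by_contra h
  obtain ⟨hi, hk⟩ := mul_ne_zero_iff.mp h
  have hvi := sub_eq_zero.mp ((mul_eq_zero.mp (eigen i)).resolve_right hi)
  have hvk := sub_eq_zero.mp ((mul_eq_zero.mp (eigen k)).resolve_right hk)
  exact hik (hvi.trans hvk.symm)

lemma sum_smul_vecMulVec_apply_eq_zero [Fintype ι] [CommRing R] [NoZeroDivisors R] {v : n → R}
    {w : ι → n → R} {lam : ι → R} (hw : ∀ j, diagonal v *ᵥ w j = lam j • w j) (c : ι → R)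
    {i k : n} (hik : v i ≠ v k) : (∑ j, c j • vecMulVec (w j) (w j)) i k = 0 := by
  simp only [Matrix.sum_apply, Matrix.smul_apply, vecMulVec_apply,
    mul_eq_zero_of_diagonal_mulVec_eq_smul (hw _) hik, smul_zero, sum_const_zero]

end Eigenvectors

theorem stmt7 (b1 b2 b3 β : ℝ) (hb1 : 0 < b1) (hb2 : 0 < b2) (hb3 : 0 < b3)
    (hβ : 0 ≤ 8 * b2 * b3 - 9 * β ^ 2) :
    (!![b1, 0, 0; 0, b2, β; 0, β, b3] : Matrix (Fin 3) (Fin 3) ℝ).PosDef ∧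
    ((Matrix.diagonal ![1, 2, 3])ᵀ * !![b1, 0, 0; 0, b2, β; 0, β, b3] +
        !![b1, 0, 0; 0, b2, β; 0, β, b3] * Matrix.diagonal ![1, 2, 3] -
        (2 : ℝ) • !![b1, 0, 0; 0, b2, β; 0, β, b3]).PosSemidef ∧
    (β ≠ 0 → ¬ (!![b1, 0, 0; 0, b2, β; 0, β, b3] : Matrix (Fin 3) (Fin 3) ℝ).IsDiag) ∧
    (β ≠ 0 →
      ¬ ∃ (w : Fin 3 → Fin 3 → ℝ) (c : Fin 3 → ℝ) (lam : Fin 3 → ℝ),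
          (∀ j, 0 < c j) ∧ (∀ j, w j ≠ 0) ∧
          (∀ j, (Matrix.diagonal ![1, 2, 3] : Matrix (Fin 3) (Fin 3) ℝ)ᵀ.mulVec (w j) =
            lam j • w j) ∧
          !![b1, 0, 0; 0, b2, β; 0, β, b3] = ∑ j, c j • vecMulVec (w j) (w j)) := by
  have hLyap : (Matrix.diagonal ![1, 2, 3])ᵀ * !![b1, 0, 0; 0, b2, β; 0, β, b3] +
        !![b1, 0, 0; 0, b2, β; 0, β, b3] * Matrix.diagonal ![1, 2, 3] -
        (2 : ℝ) • !![b1, 0, 0; 0, b2, β; 0, β, b3] =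
      !![0, 0, 0; 0, 2 * b2, 3 * β; 0, 3 * β, 4 * b3] := by
    ext i j
    rw [diagonal_transpose_mul_add_mul_diagonal_sub_smul_apply]
    fin_cases i <;> fin_cases j <;> norm_num
  refine ⟨posDef_fin_three_block hb1 hb2 (by nlinarith), ?_, fun hβ0 hdiag => ?_, ?_⟩
  · rw [hLyap]
    exact posSemidef_fin_three_block le_rfl (by positivity) (by positivity) (by nlinarith)
  · exact hβ0 (hdiag (i := 1) (j := 2) (by decide))
  · rintro hβ0 ⟨w, c, lam, -, -, heig, hsum⟩
    rw [diagonal_transpose] at heig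
    refine hβ0 ?_
    have h12 := congrFun (congrFun hsum 1) 2
    rw [sum_smul_vecMulVec_apply_eq_zero heig c (by simp)] at h12
    simpa using h12
end

section
/- For every nonzero integer k, every solution of the ODE u' = −C_k u with C_k = [[0, ik],[ik, 1]] satisfies ‖u(t)‖₂² ≤ 3 e^{−t} ‖u(0)‖₂² for all t ≥ 0, and the constant 3 is uniform in k (since κ(P_k) = (2|k|+1)/(2|k|−1) ≤ 3). -/
open Matrix Complex Finset
open scoped ComplexConjugate

/-!
The Hermitian matrix `P = lyapunovMatrix k` solves the Lyapunov equation `Cᴴ P + P C = P`, so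
along any solution of `u' = -C u` the quadratic form `u* P u` satisfies `q' = -q`, hence decays
exactly like `e^{-t}`. For `|k| ≥ 1` this form is squeezed between `‖u‖²/2` and `3‖u‖²/2`,
which costs the factor `3` when passing back to the Euclidean norm.
-/

theorem eq_exp_neg_smul_of_hasDerivAt {E : Type*} [NormedAddCommGroup E] [NormedSpace ℝ E]
    {f : ℝ → E} (hf : ∀ t, HasDerivAt f (-f t) t) (t : ℝ) :
    f t = Real.exp (-t) • f 0 := by
  have hg : ∀ s, HasDerivAt (fun s => Real.exp s • f s) 0 s := fun s => by
    simpa using (Real.hasDerivAt_exp s).fun_smul (hf s)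
  have hconst := is_const_of_deriv_eq_zero (fun s => (hg s).differentiableAt)
    (fun s => (hg s).deriv) t 0
  simp only [Real.exp_zero, one_smul] at hconst
  rw [← hconst, smul_smul, ← Real.exp_add, neg_add_cancel, Real.exp_zero, one_smul]

theorem hasDerivAt_star_dotProduct_mulVec {n : Type*} [Fintype n] (P : Matrix n n ℂ)
    {u : ℝ → n → ℂ} {u' : n → ℂ} {t : ℝ} (hu : HasDerivAt u u' t) :
    HasDerivAt (fun s => star (u s) ⬝ᵥ P *ᵥ u s)
      (star u' ⬝ᵥ P *ᵥ u t + star (u t) ⬝ᵥ P *ᵥ u') t := by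
  have hi := hasDerivAt_pi.mp hu
  simp only [dotProduct, mulVec, ← Finset.sum_add_distrib, Finset.mul_sum]
  refine HasDerivAt.fun_sum fun i _ => HasDerivAt.fun_sum fun j _ => ?_
  exact (hi i).star.fun_mul ((hi j).const_mul (P i j))

theorem star_dotProduct_mulVec_eq_exp_mul {n : Type*} [Fintype n] {C P : Matrix n n ℂ}
    (hCP : Cᴴ * P + P * C = P) {u : ℝ → n → ℂ} (hu : ∀ t, HasDerivAt u (-(C *ᵥ u t)) t)
    (t : ℝ) :
    star (u t) ⬝ᵥ P *ᵥ u t = Real.exp (-t) • (star (u 0) ⬝ᵥ P *ᵥ u 0) := by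
  refine eq_exp_neg_smul_of_hasDerivAt (f := fun t => star (u t) ⬝ᵥ P *ᵥ u t) (fun s => ?_) t
  refine (hasDerivAt_star_dotProduct_mulVec P (hu s)).congr_deriv ?_
  rw [star_neg, star_mulVec, mulVec_neg, dotProduct_neg, neg_dotProduct, ← dotProduct_mulVec,
    mulVec_mulVec, mulVec_mulVec, ← neg_add, ← dotProduct_add, ← add_mulVec, hCP]

noncomputable def lyapunovMatrix (k : ℝ) : Matrix (Fin 2) (Fin 2) ℂ :=
  !![1, -I / (2 * k); I / (2 * k), 1]

theorem conjTranspose_mul_lyapunovMatrix_add {k : ℝ} (hk : k ≠ 0) :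
    (!![0, I * k; I * k, 1] : Matrix (Fin 2) (Fin 2) ℂ)ᴴ * lyapunovMatrix k +
      lyapunovMatrix k * !![0, I * k; I * k, 1] = lyapunovMatrix k := by
  have hk' : (k : ℂ) ≠ 0 := ofReal_ne_zero.mpr hk
  ext i j
  fin_cases i <;> fin_cases j <;>
    simp [lyapunovMatrix, Matrix.mul_apply, Fin.sum_univ_two] <;> field_simp <;> ring_nf <;>
    norm_num

theorem re_star_dotProduct_lyapunovMatrix_mulVec (k : ℝ) (v : Fin 2 → ℂ) :
    (star v ⬝ᵥ lyapunovMatrix k *ᵥ v).re =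
      ‖v 0‖ ^ 2 + ‖v 1‖ ^ 2 - (v 0 * conj (v 1)).im / k := by
  have hI : I / (2 * k) = ((2 * k)⁻¹ : ℝ) * I := by push_cast; ring
  simp only [lyapunovMatrix, neg_div, hI, dotProduct, mulVec, Fin.sum_univ_two]
  simp [Complex.sq_norm, normSq_apply]
  ring

theorem abs_re_star_dotProduct_lyapunovMatrix_mulVec_sub_le (k : ℝ) (v : Fin 2 → ℂ) :
    |(star v ⬝ᵥ lyapunovMatrix k *ᵥ v).re - ∑ i, ‖v i‖ ^ 2| ≤ (∑ i, ‖v i‖ ^ 2) / (2 * |k|) := by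
  have hAMGM : 2 * ‖v 0‖ * ‖v 1‖ ≤ ‖v 0‖ ^ 2 + ‖v 1‖ ^ 2 := two_mul_le_add_sq _ _
  have him : |(v 0 * conj (v 1)).im| ≤ ‖v 0‖ * ‖v 1‖ := by
    simpa using abs_im_le_norm (v 0 * conj (v 1))
  rw [re_star_dotProduct_lyapunovMatrix_mulVec, Fin.sum_univ_two, sub_sub_cancel_left, abs_neg,
    abs_div]
  rcases eq_or_ne k 0 with rfl | hk
  · simp
  rw [div_le_div_iff₀ (abs_pos.mpr hk) (by positivity)]
  nlinarith [abs_nonneg k]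

theorem stmt9 (k : ℤ) (hk : k ≠ 0) (u : ℝ → Fin 2 → ℂ)
    (hu : ∀ t : ℝ,
      HasDerivAt u (-((!![0, Complex.I * k; Complex.I * k, 1] :
        Matrix (Fin 2) (Fin 2) ℂ).mulVec (u t))) t) :
    ∀ t : ℝ, 0 ≤ t →
      ∑ i, ‖u t i‖ ^ 2 ≤ 3 * Real.exp (-t) * ∑ i, ‖u 0 i‖ ^ 2 := by
  intro t _
  have hCP := conjTranspose_mul_lyapunovMatrix_add (Int.cast_ne_zero.mpr hk : (k : ℝ) ≠ 0)
  rw [ofReal_intCast] at hCP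
  have hdecay := congrArg re (star_dotProduct_mulVec_eq_exp_mul hCP hu t)
  rw [smul_re, smul_eq_mul] at hdecay
  have hk1 : (1 : ℝ) ≤ |(k : ℝ)| := by exact_mod_cast Int.one_le_abs hk
  have hclose : ∀ s, |(star (u s) ⬝ᵥ lyapunovMatrix k *ᵥ u s).re - ∑ i, ‖u s i‖ ^ 2| ≤
      (∑ i, ‖u s i‖ ^ 2) / 2 := fun s =>
    (abs_re_star_dotProduct_lyapunovMatrix_mulVec_sub_le k (u s)).trans
      (div_le_div_of_nonneg_left (by positivity) two_pos (by linarith))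
  have hlow := (abs_le.mp (hclose t)).1
  have hup := (abs_le.mp (hclose 0)).2
  calc ∑ i, ‖u t i‖ ^ 2 ≤ 2 * (star (u t) ⬝ᵥ lyapunovMatrix k *ᵥ u t).re := by linarith
    _ = Real.exp (-t) * (2 * (star (u 0) ⬝ᵥ lyapunovMatrix k *ᵥ u 0).re) := by
      rw [hdecay]; ring
    _ ≤ Real.exp (-t) * (3 * ∑ i, ‖u 0 i‖ ^ 2) :=
      mul_le_mul_of_nonneg_left (by linarith) (Real.exp_pos _).le
    _ = 3 * Real.exp (-t) * ∑ i, ‖u 0 i‖ ^ 2 := by ring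
end

section
/- Let C be a 2×2 diagonalizable, positive stable complex matrix with distinct eigenvalues λ₁ ≠ λ₂ having equal real parts Re λ₁ = Re λ₂ = μ, and normalized eigenvectors v₁, v₂. Set α = |⟨v₁/‖v₁‖, v₂/‖v₂‖⟩|. Then the smallest constant c such that every solution of f' = −Cf satisfies ‖f(t)‖₂ ≤ c e^{−μt} ‖f(0)‖₂ for all t ≥ 0 equals √((1+α)/(1−α)). -/
open Matrix Complex Finset

open scoped InnerProductSpace

/-!
Every solution has the form `f t = e^{-λ₁ t} a v₁ + e^{-λ₂ t} b v₂`, and since `Re λ₁ = Re λ₂ = μ`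
this gives `‖f t‖ = e^{-μ t} ‖a v₁ + z b v₂‖` with `|z| = 1`. For unit vectors with
`|⟪v₁, v₂⟫| = α`, the quantity `‖a v₁ + b v₂‖²` lies between `(1 - α)(|a|² + |b|²)` and
`(1 + α)(|a|² + |b|²)`, whatever the phases of `a` and `b`; this bounds the ratio by
`√((1 + α) / (1 - α))`. The bound is attained: choose `b` with `b ⟪v₁, v₂⟫ = -α` and wait half a
period of the relative phase `e^{(λ₁ - λ₂) t}`, which carries `v₁ + b v₂` to `v₁ - b v₂`.
-/

section UnitPair

variable {E : Type*} [NormedAddCommGroup E] [InnerProductSpace ℂ E] {u v : E}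

theorem norm_smul_add_smul_sq (hu : ‖u‖ = 1) (hv : ‖v‖ = 1) (a b : ℂ) :
    ‖a • u + b • v‖ ^ 2 = ‖a‖ ^ 2 + ‖b‖ ^ 2 + 2 * (starRingEnd ℂ a * b * ⟪u, v⟫_ℂ).re := by
  rw [@norm_add_sq ℂ, inner_smul_left, inner_smul_right, norm_smul, norm_smul, hu, hv,
    RCLike.re_to_complex, ← mul_assoc]
  ring

theorem abs_two_mul_re_conj_mul_mul_inner_le (hu : ‖u‖ = 1) (hv : ‖v‖ = 1) (a b : ℂ) :
    |2 * (starRingEnd ℂ a * b * ⟪u, v⟫_ℂ).re| ≤ ‖⟪u, v⟫_ℂ‖ * (‖a‖ ^ 2 + ‖b‖ ^ 2) := by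
  have hγ : ‖⟪u, v⟫_ℂ‖ ≤ 1 := by simpa [hu, hv] using norm_inner_le_norm (𝕜 := ℂ) u v
  calc |2 * (starRingEnd ℂ a * b * ⟪u, v⟫_ℂ).re|
      ≤ 2 * (‖a‖ * ‖b‖ * ‖⟪u, v⟫_ℂ‖) := by
        rw [abs_mul, abs_two]
        gcongr
        simpa using Complex.abs_re_le_norm (starRingEnd ℂ a * b * ⟪u, v⟫_ℂ)
    _ ≤ ‖⟪u, v⟫_ℂ‖ * (‖a‖ ^ 2 + ‖b‖ ^ 2) := by
        nlinarith [mul_nonneg (norm_nonneg ⟪u, v⟫_ℂ) (sq_nonneg (‖a‖ - ‖b‖))]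

theorem norm_smul_add_smul_le_of_norm_eq (hu : ‖u‖ = 1) (hv : ‖v‖ = 1)
    (huv : ‖⟪u, v⟫_ℂ‖ < 1) {a b a' b' : ℂ} (ha : ‖a'‖ = ‖a‖) (hb : ‖b'‖ = ‖b‖) :
    ‖a' • u + b' • v‖ ≤
      Real.sqrt ((1 + ‖⟪u, v⟫_ℂ‖) / (1 - ‖⟪u, v⟫_ℂ‖)) * ‖a • u + b • v‖ := by
  set α := ‖⟪u, v⟫_ℂ‖
  have upper : ‖a' • u + b' • v‖ ^ 2 ≤ (1 + α) * (‖a‖ ^ 2 + ‖b‖ ^ 2) := by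
    have := abs_le.mp (abs_two_mul_re_conj_mul_mul_inner_le hu hv a' b')
    rw [norm_smul_add_smul_sq hu hv, ← ha, ← hb]
    linarith
  have lower : (1 - α) * (‖a‖ ^ 2 + ‖b‖ ^ 2) ≤ ‖a • u + b • v‖ ^ 2 := by
    have := abs_le.mp (abs_two_mul_re_conj_mul_mul_inner_le hu hv a b)
    rw [norm_smul_add_smul_sq hu hv]
    linarith
  have hsq : ‖a' • u + b' • v‖ ^ 2 ≤ (1 + α) / (1 - α) * ‖a • u + b • v‖ ^ 2 := by
    rw [div_mul_eq_mul_div, le_div_iff₀ (by linarith)]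
    nlinarith [norm_nonneg ⟪u, v⟫_ℂ]
  rw [← Real.sqrt_sq (norm_nonneg (a' • u + b' • v)), ← Real.sqrt_sq (norm_nonneg (a • u + b • v)),
    ← Real.sqrt_mul (div_nonneg (by positivity) (by linarith))]
  exact Real.sqrt_le_sqrt hsq

theorem exists_norm_sub_smul_eq (hu : ‖u‖ = 1) (hv : ‖v‖ = 1) (huv : ‖⟪u, v⟫_ℂ‖ < 1) :
    ∃ b : ℂ, u + b • v ≠ 0 ∧
      ‖u - b • v‖ = Real.sqrt ((1 + ‖⟪u, v⟫_ℂ‖) / (1 - ‖⟪u, v⟫_ℂ‖)) * ‖u + b • v‖ := by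
  set γ := ⟪u, v⟫_ℂ
  set w := cexp (↑(-γ.arg) * I)
  have hw : ‖w‖ = 1 := norm_exp_ofReal_mul_I _
  -- `-w` rotates `γ` onto the negative real axis.
  have hwγ : w * γ = ‖γ‖ := by
    calc w * γ = w * (‖γ‖ * cexp (γ.arg * I)) := by rw [norm_mul_exp_arg_mul_I]
      _ = ‖γ‖ * (cexp (↑(-γ.arg) * I) * cexp (γ.arg * I)) := by ring
      _ = ‖γ‖ := by rw [← Complex.exp_add, ofReal_neg, neg_mul, neg_add_cancel, exp_zero, mul_one]
  have hplus : ‖u + -w • v‖ ^ 2 = 2 * (1 - ‖γ‖) := by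
    have h := norm_smul_add_smul_sq hu hv 1 (-w)
    rw [one_smul, map_one, one_mul, norm_one, norm_neg, hw, neg_mul, hwγ] at h
    rw [h, neg_re, ofReal_re]
    ring
  have hminus : ‖u - -w • v‖ ^ 2 = 2 * (1 + ‖γ‖) := by
    have h := norm_smul_add_smul_sq hu hv 1 w
    rw [one_smul, map_one, one_mul, norm_one, hw, hwγ] at h
    rw [sub_eq_add_neg, ← neg_smul, neg_neg, h, ofReal_re]
    ring
  have hne : u + -w • v ≠ 0 := by
    intro h
    rw [h, norm_zero] at hplus
    linarith
  refine ⟨-w, hne, (sq_eq_sq₀ (norm_nonneg _) (by positivity)).mp ?_⟩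
  rw [mul_pow, Real.sq_sqrt (div_nonneg (by positivity) (by linarith)), hplus, hminus]
  field_simp [(by linarith : 1 - ‖γ‖ ≠ 0)]

theorem norm_inner_lt_one_of_linearIndependent (hu : ‖u‖ = 1) (hv : ‖v‖ = 1)
    (huv : LinearIndependent ℂ ![u, v]) : ‖⟪u, v⟫_ℂ‖ < 1 := by
  refine (norm_inner_le_norm (𝕜 := ℂ) u v).trans_eq (by rw [hu, hv, one_mul]) |>.lt_of_ne ?_
  intro h
  have hu0 : u ≠ 0 := ne_zero_of_norm_ne_zero (hu ▸ one_ne_zero)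
  have hv0 : v ≠ 0 := ne_zero_of_norm_ne_zero (hv ▸ one_ne_zero)
  obtain ⟨r, -, hr⟩ := (norm_inner_eq_norm_iff (𝕜 := ℂ) hu0 hv0).mp (by rw [h, hu, hv, one_mul])
  have := LinearIndependent.pair_iff.mp huv r (-1) (by rw [hr, neg_one_smul, add_neg_cancel])
  exact neg_ne_zero.mpr one_ne_zero this.2

end UnitPair

section LinearODE

variable {E : Type*} [NormedAddCommGroup E] [NormedSpace ℂ E] {A : E →L[ℂ] E}

theorem hasDerivAt_cexp_smul_of_apply_eq {lam : ℂ} {x : E} (hx : A x = lam • x) (t : ℝ) :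
    HasDerivAt (fun t : ℝ => cexp (-lam * t) • x) (-A (cexp (-lam * t) • x)) t := by
  have h := ((hasDerivAt_id (t : ℂ)).const_mul (-lam)).cexp.comp_ofReal.smul_const x
  simp only [id, mul_one] at h
  rw [map_smul, hx, smul_smul, ← neg_smul]
  convert h using 2
  ring

theorem hasDerivAt_cexp_smul_add_cexp_smul {lam1 lam2 : ℂ} {x y : E} (hx : A x = lam1 • x)
    (hy : A y = lam2 • y) (t : ℝ) :
    HasDerivAt (fun t : ℝ => cexp (-lam1 * t) • x + cexp (-lam2 * t) • y)
      (-A (cexp (-lam1 * t) • x + cexp (-lam2 * t) • y)) t := by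
  rw [map_add, neg_add]
  exact (hasDerivAt_cexp_smul_of_apply_eq hx t).add (hasDerivAt_cexp_smul_of_apply_eq hy t)

theorem eq_cexp_smul_add_cexp_smul {lam1 lam2 : ℂ} {x y : E} (hx : A x = lam1 • x)
    (hy : A y = lam2 • y) {f : ℝ → E} (hf : ∀ t, HasDerivAt f (-A (f t)) t)
    (h0 : f 0 = x + y) :
    f = fun t : ℝ => cexp (-lam1 * t) • x + cexp (-lam2 * t) • y :=
  ODE_solution_unique_univ (v := fun _ z => (-A) z) (s := fun _ => Set.univ) (t₀ := 0)
    (fun _ => (-A).lipschitz.lipschitzOnWith) (fun t => ⟨hf t, trivial⟩)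
    (fun t => ⟨hasDerivAt_cexp_smul_add_cexp_smul hx hy t, trivial⟩) (by simpa using h0)

theorem norm_cexp_smul_add_cexp_smul (lam1 lam2 : ℂ) (x y : E) (t : ℝ) :
    ‖cexp (-lam1 * t) • x + cexp (-lam2 * t) • y‖ =
      Real.exp (-lam1.re * t) * ‖x + cexp ((lam1 - lam2) * t) • y‖ := by
  have h : cexp (-lam2 * t) = cexp (-lam1 * t) * cexp ((lam1 - lam2) * t) := by
    rw [← Complex.exp_add]; ring_nf
  rw [h, mul_smul, ← smul_add, norm_smul, Complex.norm_exp]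
  simp

end LinearODE

theorem exists_nonneg_cexp_mul_eq_neg_one {z : ℂ} (hre : z.re = 0) (hz : z ≠ 0) :
    ∃ T : ℝ, 0 ≤ T ∧ cexp (z * T) = -1 := by
  set y := z.im with hy
  have hz' : z = y * I := by apply Complex.ext <;> simp [hre, hy]
  have hy0 : (y : ℂ) ≠ 0 := by
    rw [Ne, ofReal_eq_zero]
    exact fun h => hz (Complex.ext hre h)
  rcases le_or_gt y 0 with hneg | hpos
  · refine ⟨-Real.pi / y, div_nonneg_of_nonpos (by linarith [Real.pi_pos]) hneg, ?_⟩
    rw [hz', ← exp_neg_pi_mul_I]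
    congr 1
    push_cast
    field_simp
  · refine ⟨Real.pi / y, by positivity, ?_⟩
    rw [hz', ← exp_pi_mul_I]
    congr 1
    push_cast
    field_simp

section DecayConstant

variable {E : Type*} [NormedAddCommGroup E] [InnerProductSpace ℂ E] {A : E →L[ℂ] E}

def IsDecayConstant (A : E →L[ℂ] E) (μ c : ℝ) : Prop :=
  ∀ f : ℝ → E, (∀ t, HasDerivAt f (-A (f t)) t) →
    ∀ t, 0 ≤ t → ‖f t‖ ≤ c * Real.exp (-μ * t) * ‖f 0‖

variable {u v : E} {lam1 lam2 : ℂ} {μ : ℝ}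

theorem isDecayConstant_sqrt (hu : ‖u‖ = 1) (hv : ‖v‖ = 1) (huv : ‖⟪u, v⟫_ℂ‖ < 1)
    (hspan : Submodule.span ℂ {u, v} = ⊤) (hAu : A u = lam1 • u) (hAv : A v = lam2 • v)
    (hre1 : lam1.re = μ) (hre2 : lam2.re = μ) :
    IsDecayConstant A μ (Real.sqrt ((1 + ‖⟪u, v⟫_ℂ‖) / (1 - ‖⟪u, v⟫_ℂ‖))) := by
  intro f hf t ht
  obtain ⟨a, b, hab⟩ := Submodule.mem_span_pair.mp (hspan ▸ Submodule.mem_top : f 0 ∈ _)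
  have hsol := eq_cexp_smul_add_cexp_smul (x := a • u) (y := b • v)
    (by rw [map_smul, hAu, smul_comm]) (by rw [map_smul, hAv, smul_comm]) hf hab.symm
  have htwist : ‖cexp ((lam1 - lam2) * t) * b‖ = ‖b‖ := by
    rw [norm_mul, Complex.norm_exp]
    simp [hre1, hre2]
  rw [congrFun hsol t, norm_cexp_smul_add_cexp_smul, hre1, smul_smul, ← hab,
    mul_comm _ (Real.exp _), mul_assoc]
  gcongr
  exact norm_smul_add_smul_le_of_norm_eq hu hv huv rfl htwist

theorem sqrt_le_of_isDecayConstant (hu : ‖u‖ = 1) (hv : ‖v‖ = 1) (huv : ‖⟪u, v⟫_ℂ‖ < 1)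
    (hAu : A u = lam1 • u) (hAv : A v = lam2 • v) (hne : lam1 ≠ lam2)
    (hre1 : lam1.re = μ) (hre2 : lam2.re = μ) {c : ℝ} (hc : IsDecayConstant A μ c) :
    Real.sqrt ((1 + ‖⟪u, v⟫_ℂ‖) / (1 - ‖⟪u, v⟫_ℂ‖)) ≤ c := by
  obtain ⟨b, hb0, hb⟩ := exists_norm_sub_smul_eq hu hv huv
  -- Half a period of the relative phase turns `u + b • v` into `u - b • v`.
  obtain ⟨T, hT, hphase⟩ := exists_nonneg_cexp_mul_eq_neg_one (z := lam1 - lam2)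
    (by simp [hre1, hre2]) (sub_ne_zero.mpr hne)
  have hAbv : A (b • v) = lam2 • b • v := by rw [map_smul, hAv, smul_comm]
  have h := hc _ (hasDerivAt_cexp_smul_add_cexp_smul hAu hAbv) T hT
  simp only [norm_cexp_smul_add_cexp_smul, hphase, neg_one_smul, ← sub_eq_add_neg, hb, hre1,
    Complex.ofReal_zero, mul_zero, Complex.exp_zero, one_smul] at h
  have hpos : 0 < Real.exp (-μ * T) * ‖u + b • v‖ := by positivity
  refine le_of_mul_le_mul_right ?_ hpos
  linarith

theorem isLeast_isDecayConstant (hE : Module.finrank ℂ E = 2) (hu : ‖u‖ = 1) (hv : ‖v‖ = 1)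
    (hAu : A u = lam1 • u) (hAv : A v = lam2 • v) (hne : lam1 ≠ lam2)
    (hre1 : lam1.re = μ) (hre2 : lam2.re = μ) :
    IsLeast {c | IsDecayConstant A μ c} (Real.sqrt ((1 + ‖⟪u, v⟫_ℂ‖) / (1 - ‖⟪u, v⟫_ℂ‖))) := by
  have hli : LinearIndependent ℂ ![u, v] := by
    refine Module.End.eigenvectors_linearIndependent' (A : Module.End ℂ E) ![lam1, lam2] ?_ _
      fun i => ?_
    · intro i j hij
      fin_cases i <;> fin_cases j <;> simp_all [eq_comm]
    · fin_cases i
      · exact ⟨Module.End.mem_eigenspace_iff.mpr hAu, ne_zero_of_norm_ne_zero (hu ▸ one_ne_zero)⟩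
      · exact ⟨Module.End.mem_eigenspace_iff.mpr hAv, ne_zero_of_norm_ne_zero (hv ▸ one_ne_zero)⟩
  have huv := norm_inner_lt_one_of_linearIndependent hu hv hli
  have hspan : Submodule.span ℂ {u, v} = ⊤ := by
    simpa [Matrix.range_cons, Set.pair_comm] using hli.span_eq_top_of_card_eq_finrank (by simp [hE])
  exact ⟨isDecayConstant_sqrt hu hv huv hspan hAu hAv hre1 hre2,
    fun c hc => sqrt_le_of_isDecayConstant hu hv huv hAu hAv hne hre1 hre2 hc⟩

end DecayConstant

theorem isDecayConstant_toEuclideanCLM_iff {ι : Type*} [Fintype ι] [DecidableEq ι]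
    (C : Matrix ι ι ℂ) (μ c : ℝ) :
    IsDecayConstant (Matrix.toEuclideanCLM (n := ι) (𝕜 := ℂ) C) μ c ↔
      ∀ f : ℝ → ι → ℂ, (∀ t : ℝ, HasDerivAt f (-(C.mulVec (f t))) t) →
        ∀ t : ℝ, 0 ≤ t →
          Real.sqrt (∑ i, ‖f t i‖ ^ 2) ≤ c * Real.exp (-μ * t) * Real.sqrt (∑ i, ‖f 0 i‖ ^ 2) := by
  constructor
  · intro hc f hf t ht
    simpa [EuclideanSpace.norm_eq] using hc (fun t => WithLp.toLp 2 (f t))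
      (fun t => (PiLp.hasFDerivAt_toLp 2 (f t)).comp_hasDerivAt t (hf t)) t ht
  · intro hc F hF t ht
    simpa [EuclideanSpace.norm_eq] using hc (fun t => WithLp.ofLp (F t))
      (fun t => (PiLp.hasFDerivAt_ofLp 2 (F t)).comp_hasDerivAt t (hF t)) t ht

theorem stmt10_general (C : Matrix (Fin 2) (Fin 2) ℂ) (lam1 lam2 : ℂ) (v1 v2 : Fin 2 → ℂ)
    (μ α : ℝ)
    (he1 : C.mulVec v1 = lam1 • v1) (he2 : C.mulVec v2 = lam2 • v2)
    (hne : lam1 ≠ lam2)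
    (hre1 : lam1.re = μ) (hre2 : lam2.re = μ)
    (hn1 : Real.sqrt (∑ i, ‖v1 i‖ ^ 2) = 1) (hn2 : Real.sqrt (∑ i, ‖v2 i‖ ^ 2) = 1)
    (hα : α = ‖star v1 ⬝ᵥ v2‖) :
    IsLeast {c : ℝ |
        ∀ f : ℝ → Fin 2 → ℂ, (∀ t : ℝ, HasDerivAt f (-(C.mulVec (f t))) t) →
          ∀ t : ℝ, 0 ≤ t →
            Real.sqrt (∑ i, ‖f t i‖ ^ 2) ≤
              c * Real.exp (-μ * t) * Real.sqrt (∑ i, ‖f 0 i‖ ^ 2)}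
      (Real.sqrt ((1 + α) / (1 - α))) := by
  have hinner : star v1 ⬝ᵥ v2 = ⟪WithLp.toLp 2 v1, WithLp.toLp 2 v2⟫_ℂ := dotProduct_comm _ _
  simp_rw [← isDecayConstant_toEuclideanCLM_iff, hα, hinner]
  exact isLeast_isDecayConstant (by simp) (by rwa [EuclideanSpace.norm_eq])
    (by rwa [EuclideanSpace.norm_eq]) (by simp [he1]) (by simp [he2]) hne hre1 hre2

theorem stmt10 (C : Matrix (Fin 2) (Fin 2) ℂ) (lam1 lam2 : ℂ) (v1 v2 : Fin 2 → ℂ)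
    (μ α : ℝ)
    (hv1 : v1 ≠ 0) (hv2 : v2 ≠ 0)
    (he1 : C.mulVec v1 = lam1 • v1) (he2 : C.mulVec v2 = lam2 • v2)
    (hne : lam1 ≠ lam2)
    (hre1 : lam1.re = μ) (hre2 : lam2.re = μ) (hμ : 0 < μ)
    (hn1 : Real.sqrt (∑ i, ‖v1 i‖ ^ 2) = 1) (hn2 : Real.sqrt (∑ i, ‖v2 i‖ ^ 2) = 1)
    (hα : α = ‖star v1 ⬝ᵥ v2‖) :
    IsLeast {c : ℝ |
        ∀ f : ℝ → Fin 2 → ℂ, (∀ t : ℝ, HasDerivAt f (-(C.mulVec (f t))) t) →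
          ∀ t : ℝ, 0 ≤ t →
            Real.sqrt (∑ i, ‖f t i‖ ^ 2) ≤
              c * Real.exp (-μ * t) * Real.sqrt (∑ i, ‖f 0 i‖ ^ 2)}
      (Real.sqrt ((1 + α) / (1 - α))) :=
  stmt10_general C lam1 lam2 v1 v2 μ α he1 he2 hne hre1 hre2 hn1 hn2 hα
end

section
/- Let C be a 2×2 diagonalizable, positive stable complex matrix with eigenvalues satisfying Re λ₁ < Re λ₂ and Im λ₁ = Im λ₂, and normalized eigenvectors v₁, v₂ with α = |⟨v₁, v₂⟩|. Then the smallest constant c such that every solution of f' = −Cf satisfies ‖f(t)‖₂ ≤ c e^{−Re λ₁ · t} ‖f(0)‖₂ for all t ≥ 0 equals 1/√(1−α²). -/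
open Matrix Complex Finset
open Filter Topology
open scoped InnerProductSpace

/-!
Since the eigenvalues are distinct, every solution is
`f t = (e^{-λ₁ t} a) • v₁ + (e^{-λ₂ t} b) • v₂`, and since `Im λ₁ = Im λ₂` this is
`e^{-λ₁ t} • (a • v₁ + (s b) • v₂)` with `s = e^{-(Re λ₂ - Re λ₁) t} ∈ (0, 1]`.
The component of `a • v₁ + b • v₂` orthogonal to `v₂` has norm `‖a‖ √(1 - α²)`, so
`‖a‖ ≤ ‖f 0‖ / √(1 - α²)`; as `a • v₁ + (s b) • v₂` is a convex combination of `a • v₁` and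
`f 0`, this gives the bound. Conversely, the solution with `f 0 = v₁ - ⟪v₂, v₁⟫ • v₂`, of norm
`√(1 - α²)`, satisfies `e^{Re λ₁ t} ‖f t‖ → ‖v₁‖ = 1`, which forces `c ≥ 1 / √(1 - α²)`.
-/

lemma hasDerivAt_cexp_mul_ofReal (μ : ℂ) (t : ℝ) :
    HasDerivAt (fun s : ℝ => cexp (μ * s)) (μ * cexp (μ * t)) t := by
  simpa [mul_comm] using ((hasDerivAt_id (t : ℂ)).const_mul μ).cexp.comp_ofReal

lemma norm_cexp_mul_ofReal (μ : ℂ) (t : ℝ) : ‖cexp (μ * t)‖ = Real.exp (μ.re * t) := by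
  simp [Complex.norm_exp]

lemma cexp_mul_ofReal_eq_of_im_eq {μ ν : ℂ} (h : μ.im = ν.im) (t : ℝ) :
    cexp (ν * t) = cexp (μ * t) * Real.exp ((ν.re - μ.re) * t) := by
  rw [ofReal_exp, ← Complex.exp_add]
  congr 1
  apply Complex.ext <;> simp [h]
  ring

lemma eq_cexp_mul_of_hasDerivAt {μ : ℂ} {a : ℝ → ℂ} (h : ∀ t, HasDerivAt a (-(μ * a t)) t)
    (t : ℝ) : a t = cexp (-μ * t) * a 0 := by
  have hderiv : ∀ s : ℝ, HasDerivAt (fun s : ℝ => cexp (μ * s) * a s) 0 s := fun s =>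
    ((hasDerivAt_cexp_mul_ofReal μ s).mul (h s)).congr_deriv (by ring)
  have hconst := is_const_of_deriv_eq_zero (fun s => (hderiv s).differentiableAt)
    (fun s => (hderiv s).deriv) t 0
  simp only [ofReal_zero, mul_zero, Complex.exp_zero, one_mul] at hconst
  rw [← hconst, ← mul_assoc, ← Complex.exp_add]
  simp

lemma linearIndependent_pair_of_eigenvectors {K M : Type*} [Field K] [AddCommGroup M]
    [Module K M] {A : M →ₗ[K] M} {μ₁ μ₂ : K} {v₁ v₂ : M} (hμ : μ₁ ≠ μ₂) (hv₁ : v₁ ≠ 0)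
    (hv₂ : v₂ ≠ 0) (he₁ : A v₁ = μ₁ • v₁) (he₂ : A v₂ = μ₂ • v₂) :
    LinearIndependent K ![v₁, v₂] :=
  Module.End.eigenvectors_linearIndependent' A ![μ₁, μ₂]
    (by simp [Function.Injective, Fin.forall_fin_two, hμ, hμ.symm]) ![v₁, v₂]
    (by simp [Fin.forall_fin_two, Module.End.hasEigenvector_iff, he₁, he₂, hv₁, hv₂])

section LinearODE

variable {E : Type*} [NormedAddCommGroup E] [NormedSpace ℂ E]

lemma apply_eq_cexp_mul_of_hasDerivAt {A : E →ₗ[ℂ] E} {φ : E →L[ℂ] ℂ} {μ : ℂ}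
    (hφ : ∀ x, φ (A x) = μ * φ x) {f : ℝ → E} (hf : ∀ t, HasDerivAt f (-(A (f t))) t)
    (t : ℝ) : φ (f t) = cexp (-μ * t) * φ (f 0) :=
  eq_cexp_mul_of_hasDerivAt (a := fun s => φ (f s)) (fun s => by
    simpa [hφ, Function.comp_def] using
      (φ.hasFDerivAt.restrictScalars ℝ).comp_hasDerivAt s (hf s)) t

lemma Module.Basis.eq_sum_cexp_smul_of_hasDerivAt [FiniteDimensional ℂ E] {ι : Type*}
    [Fintype ι] (B : Module.Basis ι ℂ E) {A : E →ₗ[ℂ] E} {μ : ι → ℂ}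
    (hA : ∀ i, A (B i) = μ i • B i) {f : ℝ → E} (hf : ∀ t, HasDerivAt f (-(A (f t))) t)
    (t : ℝ) : f t = ∑ i, (cexp (-μ i * t) * B.repr (f 0) i) • B i := by
  conv_lhs => rw [← B.sum_repr (f t)]
  refine Finset.sum_congr rfl fun i _ => ?_
  have hcoord : (B.coord i).comp A = μ i • B.coord i := B.ext fun j => by
    by_cases hij : j = i <;> simp [hA, hij]
  exact congrArg (· • B i) (apply_eq_cexp_mul_of_hasDerivAt
    (φ := LinearMap.toContinuousLinearMap (B.coord i)) (LinearMap.congr_fun hcoord) hf t)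

lemma exists_eq_cexp_smul_add_cexp_smul_of_hasDerivAt [FiniteDimensional ℂ E]
    (hE : Module.finrank ℂ E = 2) {A : E →ₗ[ℂ] E} {μ₁ μ₂ : ℂ} {v₁ v₂ : E}
    (hind : LinearIndependent ℂ ![v₁, v₂]) (he₁ : A v₁ = μ₁ • v₁) (he₂ : A v₂ = μ₂ • v₂)
    {f : ℝ → E} (hf : ∀ t, HasDerivAt f (-(A (f t))) t) :
    ∃ a b : ℂ, ∀ t : ℝ, f t = (cexp (-μ₁ * t) * a) • v₁ + (cexp (-μ₂ * t) * b) • v₂ := by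
  let B := basisOfLinearIndependentOfCardEqFinrank hind (by simp [hE])
  have hB : ⇑B = ![v₁, v₂] := coe_basisOfLinearIndependentOfCardEqFinrank hind _
  refine ⟨B.repr (f 0) 0, B.repr (f 0) 1, fun t => ?_⟩
  have := B.eq_sum_cexp_smul_of_hasDerivAt (μ := ![μ₁, μ₂]) (A := A)
    (by simp [Fin.forall_fin_two, hB, he₁, he₂]) hf t
  simpa [Fin.sum_univ_two, hB] using this

lemma hasDerivAt_cexp_smul_add_cexp_smul_s11 {A : E →ₗ[ℂ] E} {μ₁ μ₂ : ℂ} {v₁ v₂ : E}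
    (he₁ : A v₁ = μ₁ • v₁) (he₂ : A v₂ = μ₂ • v₂) (a b : ℂ) (t : ℝ) :
    HasDerivAt (fun s : ℝ => (cexp (-μ₁ * s) * a) • v₁ + (cexp (-μ₂ * s) * b) • v₂)
      (-(A ((cexp (-μ₁ * t) * a) • v₁ + (cexp (-μ₂ * t) * b) • v₂))) t := by
  have h₁ := ((hasDerivAt_cexp_mul_ofReal (-μ₁) t).mul_const a).smul_const v₁
  have h₂ := ((hasDerivAt_cexp_mul_ofReal (-μ₂) t).mul_const b).smul_const v₂
  refine (h₁.add h₂).congr_deriv ?_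
  simp only [map_add, map_smul, he₁, he₂]
  module

lemma norm_cexp_smul_add_cexp_smul_s11 {μ₁ μ₂ : ℂ} (him : μ₁.im = μ₂.im) (a b : ℂ) (u₁ u₂ : E)
    (t : ℝ) : ‖(cexp (-μ₁ * t) * a) • u₁ + (cexp (-μ₂ * t) * b) • u₂‖ =
      Real.exp (-μ₁.re * t) * ‖a • u₁ + (Real.exp (-(μ₂.re - μ₁.re) * t) * b) • u₂‖ := by
  have hsplit := cexp_mul_ofReal_eq_of_im_eq (μ := -μ₁) (ν := -μ₂) (by simp [him]) t
  rw [show (-μ₂).re - (-μ₁).re = -(μ₂.re - μ₁.re) by simp; ring] at hsplit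
  rw [hsplit, ← neg_re, ← norm_cexp_mul_ofReal, ← norm_smul]
  congr 1
  module

lemma norm_smul_le_of_forall_norm_cexp_smul_add_cexp_smul_le {μ₁ μ₂ : ℂ} (hre : μ₁.re < μ₂.re)
    (him : μ₁.im = μ₂.im) {c : ℝ} (a b : ℂ) (u₁ u₂ : E)
    (h : ∀ t : ℝ, 0 ≤ t → ‖(cexp (-μ₁ * t) * a) • u₁ + (cexp (-μ₂ * t) * b) • u₂‖ ≤
      c * Real.exp (-μ₁.re * t) * ‖a • u₁ + b • u₂‖) :
    ‖a • u₁‖ ≤ c * ‖a • u₁ + b • u₂‖ := by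
  have hdecay : Tendsto (fun t : ℝ => Real.exp (-(μ₂.re - μ₁.re) * t)) atTop (𝓝 0) := by
    simpa only [neg_mul, Function.comp_def, id] using
      Real.tendsto_exp_neg_atTop_nhds_zero.comp (tendsto_id.const_mul_atTop (sub_pos.2 hre))
  have hlim : Tendsto (fun t : ℝ => ‖a • u₁ + (Real.exp (-(μ₂.re - μ₁.re) * t) * b) • u₂‖)
      atTop (𝓝 ‖a • u₁‖) := by
    simpa using (tendsto_const_nhds.add ((hdecay.ofReal.mul_const b).smul_const u₂)).norm
  refine le_of_tendsto hlim (eventually_atTop.2 ⟨0, fun t ht => ?_⟩)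
  have := h t ht
  rw [norm_cexp_smul_add_cexp_smul_s11 him, mul_right_comm c] at this
  exact le_of_mul_le_mul_left (by linarith) (Real.exp_pos _)

end LinearODE

section InnerProduct

variable {E : Type*} [NormedAddCommGroup E] [InnerProductSpace ℂ E] {u₁ u₂ : E}

lemma norm_le_norm_add_of_inner_eq_zero {x y : E} (h : ⟪x, y⟫_ℂ = 0) : ‖x‖ ≤ ‖x + y‖ := by
  have := norm_add_sq_eq_norm_sq_add_norm_sq_of_inner_eq_zero x y h
  exact le_of_sq_le_sq (by nlinarith [sq_nonneg ‖y‖]) (norm_nonneg _)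

lemma inner_sub_inner_smul_eq_zero (hu₂ : ‖u₂‖ = 1) (u₁ : E) :
    ⟪u₁ - ⟪u₂, u₁⟫_ℂ • u₂, u₂⟫_ℂ = 0 := by
  rw [inner_sub_left, inner_smul_left, inner_self_eq_norm_sq_to_K, hu₂, inner_conj_symm]
  simp

lemma norm_sub_inner_smul_sq (hu₂ : ‖u₂‖ = 1) (u₁ : E) :
    ‖u₁ - ⟪u₂, u₁⟫_ℂ • u₂‖ ^ 2 = ‖u₁‖ ^ 2 - ‖⟪u₁, u₂⟫_ℂ‖ ^ 2 := by
  have h := norm_add_sq_eq_norm_sq_add_norm_sq_of_inner_eq_zero (𝕜 := ℂ)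
    (u₁ - ⟪u₂, u₁⟫_ℂ • u₂) (⟪u₂, u₁⟫_ℂ • u₂)
    (by rw [inner_smul_right, inner_sub_inner_smul_eq_zero hu₂, mul_zero])
  rw [sub_add_cancel, norm_smul, hu₂, mul_one, norm_inner_symm] at h
  linarith

lemma norm_smul_mul_norm_sub_inner_smul_le (hu₂ : ‖u₂‖ = 1) (a b : ℂ) :
    ‖a‖ * ‖u₁ - ⟪u₂, u₁⟫_ℂ • u₂‖ ≤ ‖a • u₁ + b • u₂‖ := by
  have hdecomp : a • u₁ + b • u₂ = a • (u₁ - ⟪u₂, u₁⟫_ℂ • u₂) + (a * ⟪u₂, u₁⟫_ℂ + b) • u₂ := by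
    module
  rw [hdecomp, ← norm_smul]
  refine norm_le_norm_add_of_inner_eq_zero ?_
  rw [inner_smul_left, inner_smul_right, inner_sub_inner_smul_eq_zero hu₂, mul_zero, mul_zero]

lemma norm_sub_inner_smul_eq_sqrt (hu₁ : ‖u₁‖ = 1) (hu₂ : ‖u₂‖ = 1) :
    ‖u₁ - ⟪u₂, u₁⟫_ℂ • u₂‖ = √(1 - ‖⟪u₁, u₂⟫_ℂ‖ ^ 2) := by
  rw [← Real.sqrt_sq (norm_nonneg (u₁ - _)), norm_sub_inner_smul_sq hu₂, hu₁, one_pow]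

lemma norm_inner_lt_one_of_linearIndependent_s11 (hu₁ : ‖u₁‖ = 1) (hu₂ : ‖u₂‖ = 1)
    (h : LinearIndependent ℂ ![u₁, u₂]) : ‖⟪u₁, u₂⟫_ℂ‖ < 1 := by
  have hne : u₁ - ⟪u₂, u₁⟫_ℂ • u₂ ≠ 0 := fun h0 => by
    have := LinearIndependent.pair_iff.1 h 1 (-⟪u₂, u₁⟫_ℂ) (by rw [← h0]; module)
    exact one_ne_zero this.1
  have := norm_sub_inner_smul_sq hu₂ u₁
  rw [hu₁, one_pow] at this
  nlinarith [norm_pos_iff.2 hne, norm_nonneg ⟪u₁, u₂⟫_ℂ]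

lemma norm_smul_add_ofReal_mul_smul_le (hu₁ : ‖u₁‖ = 1) (hu₂ : ‖u₂‖ = 1)
    (hlt : ‖⟪u₁, u₂⟫_ℂ‖ < 1) (a b : ℂ) {s : ℝ} (hs₀ : 0 ≤ s) (hs₁ : s ≤ 1) :
    ‖a • u₁ + (s * b) • u₂‖ ≤ 1 / √(1 - ‖⟪u₁, u₂⟫_ℂ‖ ^ 2) * ‖a • u₁ + b • u₂‖ := by
  set K := 1 / √(1 - ‖⟪u₁, u₂⟫_ℂ‖ ^ 2)
  have hroot_pos : 0 < √(1 - ‖⟪u₁, u₂⟫_ℂ‖ ^ 2) :=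
    Real.sqrt_pos.2 (by nlinarith [norm_nonneg ⟪u₁, u₂⟫_ℂ])
  have hroot_le : √(1 - ‖⟪u₁, u₂⟫_ℂ‖ ^ 2) ≤ 1 :=
    Real.sqrt_le_one.2 (by nlinarith [norm_nonneg ⟪u₁, u₂⟫_ℂ])
  have hK : 1 ≤ K := by rw [le_div_iff₀ hroot_pos, one_mul]; exact hroot_le
  have ha : ‖a‖ ≤ K * ‖a • u₁ + b • u₂‖ := by
    rw [div_mul_eq_mul_div, one_mul, le_div_iff₀ hroot_pos,
      ← norm_sub_inner_smul_eq_sqrt hu₁ hu₂]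
    exact norm_smul_mul_norm_sub_inner_smul_le hu₂ a b
  have hconvex : a • u₁ + (s * b) • u₂ = (1 - s) • (a • u₁) + s • (a • u₁ + b • u₂) := by
    rw [mul_smul, Complex.coe_smul]; module
  calc ‖a • u₁ + (s * b) • u₂‖ ≤ (1 - s) * ‖a‖ + s * ‖a • u₁ + b • u₂‖ := by
        rw [hconvex]
        refine (norm_add_le _ _).trans_eq ?_
        rw [norm_smul, norm_smul, norm_smul, hu₁, mul_one, Real.norm_of_nonneg (by linarith),
          Real.norm_of_nonneg hs₀]
    _ ≤ (1 - s) * (K * ‖a • u₁ + b • u₂‖) + s * (K * ‖a • u₁ + b • u₂‖) :=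
        add_le_add (mul_le_mul_of_nonneg_left ha (by linarith))
          (mul_le_mul_of_nonneg_left (le_mul_of_one_le_left (norm_nonneg _) hK) hs₀)
    _ = K * ‖a • u₁ + b • u₂‖ := by ring

lemma norm_cexp_smul_add_cexp_smul_le (hu₁ : ‖u₁‖ = 1) (hu₂ : ‖u₂‖ = 1)
    (hlt : ‖⟪u₁, u₂⟫_ℂ‖ < 1) {μ₁ μ₂ : ℂ} (hre : μ₁.re ≤ μ₂.re) (him : μ₁.im = μ₂.im)
    (a b : ℂ) {t : ℝ} (ht : 0 ≤ t) :
    ‖(cexp (-μ₁ * t) * a) • u₁ + (cexp (-μ₂ * t) * b) • u₂‖ ≤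
      1 / √(1 - ‖⟪u₁, u₂⟫_ℂ‖ ^ 2) * Real.exp (-μ₁.re * t) * ‖a • u₁ + b • u₂‖ := by
  have hdecay : -(μ₂.re - μ₁.re) * t ≤ 0 := mul_nonpos_of_nonpos_of_nonneg (by linarith) ht
  have hbound := norm_smul_add_ofReal_mul_smul_le hu₁ hu₂ hlt a b (Real.exp_nonneg _)
    (Real.exp_le_one_iff.2 hdecay)
  rw [norm_cexp_smul_add_cexp_smul_s11 him, mul_right_comm, mul_comm (Real.exp _)]
  exact mul_le_mul_of_nonneg_right hbound (Real.exp_nonneg _)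

end InnerProduct

lemma sqrt_sum_norm_sq_eq_norm_toLp {𝕜 ι : Type*} [RCLike 𝕜] [Fintype ι] (x : ι → 𝕜) :
    √(∑ i, ‖x i‖ ^ 2) = ‖WithLp.toLp 2 x‖ := by
  rw [EuclideanSpace.norm_eq]

theorem stmt11_general (C : Matrix (Fin 2) (Fin 2) ℂ) (lam1 lam2 : ℂ) (v1 v2 : Fin 2 → ℂ) (α : ℝ)
    (he1 : C.mulVec v1 = lam1 • v1) (he2 : C.mulVec v2 = lam2 • v2)
    (hre : lam1.re < lam2.re) (him : lam1.im = lam2.im)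
    (hn1 : Real.sqrt (∑ i, ‖v1 i‖ ^ 2) = 1) (hn2 : Real.sqrt (∑ i, ‖v2 i‖ ^ 2) = 1)
    (hα : α = ‖star v1 ⬝ᵥ v2‖) :
    IsLeast {c : ℝ |
        ∀ f : ℝ → Fin 2 → ℂ, (∀ t : ℝ, HasDerivAt f (-(C.mulVec (f t))) t) →
          ∀ t : ℝ, 0 ≤ t →
            Real.sqrt (∑ i, ‖f t i‖ ^ 2) ≤
              c * Real.exp (-lam1.re * t) * Real.sqrt (∑ i, ‖f 0 i‖ ^ 2)}
      (1 / Real.sqrt (1 - α ^ 2)) := by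
  set u₁ : EuclideanSpace ℂ (Fin 2) := WithLp.toLp 2 v1
  set u₂ : EuclideanSpace ℂ (Fin 2) := WithLp.toLp 2 v2
  rw [sqrt_sum_norm_sq_eq_norm_toLp] at hn1 hn2
  have hα' : α = ‖⟪u₁, u₂⟫_ℂ‖ := by rw [hα, EuclideanSpace.inner_toLp_toLp, dotProduct_comm]
  have hind : LinearIndependent ℂ ![v1, v2] :=
    linearIndependent_pair_of_eigenvectors (A := C.mulVecLin) (fun h => hre.ne (congrArg re h))
      (by rintro rfl; simp at hn1) (by rintro rfl; simp at hn2) he1 he2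
  have hind' : LinearIndependent ℂ ![u₁, u₂] := LinearIndependent.pair_iff.2 fun s t h =>
    LinearIndependent.pair_iff.1 hind s t (congrArg WithLp.ofLp h)
  have hlt : α < 1 := hα' ▸ norm_inner_lt_one_of_linearIndependent_s11 hn1 hn2 hind'
  subst hα'
  refine ⟨fun f hf t ht => ?_, fun c hc => ?_⟩
  · obtain ⟨a, b, hab⟩ := exists_eq_cexp_smul_add_cexp_smul_of_hasDerivAt (A := C.mulVecLin)
      (by simp) hind he1 he2 hf
    simp only [sqrt_sum_norm_sq_eq_norm_toLp, hab, WithLp.toLp_add, WithLp.toLp_smul, ofReal_zero,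
      mul_zero, Complex.exp_zero, one_mul]
    exact norm_cexp_smul_add_cexp_smul_le hn1 hn2 hlt hre.le him a b ht
  · have hsol := hc _
      (hasDerivAt_cexp_smul_add_cexp_smul_s11 (A := C.mulVecLin) he1 he2 1 (-⟪u₂, u₁⟫_ℂ))
    simp only [sqrt_sum_norm_sq_eq_norm_toLp, WithLp.toLp_add, WithLp.toLp_smul, ofReal_zero,
      mul_zero, Complex.exp_zero, one_mul] at hsol
    have key := norm_smul_le_of_forall_norm_cexp_smul_add_cexp_smul_le hre him 1 _ u₁ u₂ hsol
    rw [one_smul, hn1, neg_smul, ← sub_eq_add_neg, norm_sub_inner_smul_eq_sqrt hn1 hn2] at key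
    rw [div_le_iff₀ (Real.sqrt_pos.2 (by nlinarith [norm_nonneg ⟪u₁, u₂⟫_ℂ]))]
    exact key

theorem stmt11 (C : Matrix (Fin 2) (Fin 2) ℂ) (lam1 lam2 : ℂ) (v1 v2 : Fin 2 → ℂ) (α : ℝ)
    (hv1 : v1 ≠ 0) (hv2 : v2 ≠ 0)
    (he1 : C.mulVec v1 = lam1 • v1) (he2 : C.mulVec v2 = lam2 • v2)
    (hre : lam1.re < lam2.re) (him : lam1.im = lam2.im)
    (hstable : 0 < lam1.re)
    (hn1 : Real.sqrt (∑ i, ‖v1 i‖ ^ 2) = 1) (hn2 : Real.sqrt (∑ i, ‖v2 i‖ ^ 2) = 1)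
    (hα : α = ‖star v1 ⬝ᵥ v2‖) :
    IsLeast {c : ℝ |
        ∀ f : ℝ → Fin 2 → ℂ, (∀ t : ℝ, HasDerivAt f (-(C.mulVec (f t))) t) →
          ∀ t : ℝ, 0 ≤ t →
            Real.sqrt (∑ i, ‖f t i‖ ^ 2) ≤
              c * Real.exp (-lam1.re * t) * Real.sqrt (∑ i, ‖f 0 i‖ ^ 2)}
      (1 / Real.sqrt (1 - α ^ 2)) :=
  stmt11_general C lam1 lam2 v1 v2 α he1 he2 hre him hn1 hn2 hα
end

section
/- Let α ∈ [0,1), b > 0, and define g(z) = (1−α²)(1/b + b z²)/(1 − 2αz + z²) for z ∈ ℝ (with 1 − 2αz + z² > 0). Then g has exactly two critical points z_± = (b − 1/b ± √((b−1/b)² + 4α²))/(2αb) (for α > 0), with z_− < 0 < z_+; g attains its global minimum on ℝ at z_− and its global maximum on ℝ at z_+. -/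
/-!
Write `g = (1 - α²) N / D` with `N z = 1/b + b z²` and `D z = 1 - 2αz + z² > 0`. The numerator of
`g'` is `-2 (1 - α²)` times the quadratic `q z = αb z² - (b - 1/b) z - α/b`, whose discriminant is
`(b - 1/b)² + 4α²`, so its roots are `z_±`; they have opposite signs because the square root of
the discriminant exceeds `|b - 1/b|`.
Global optimality needs no second-derivative test: for every root `w` of `q`,
`N z D w - N w D z = (b - 1/b - 2αb w) (z - w)²`, and the slope `b - 1/b - 2αb w` equals
`±√((b - 1/b)² + 4α²)` at `w = z_∓`, so `g z - g w` has a constant sign.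
-/

open Real

lemma abs_lt_sqrt_sq_add (c : ℝ) {d : ℝ} (hd : 0 < d) : |c| < √(c ^ 2 + d) := by
  rw [← sqrt_sq_eq_abs]
  exact sqrt_lt_sqrt (sq_nonneg c) (by linarith)

lemma mul_div_le_mul_div_of_sub_nonneg {K N₁ D₁ N₂ D₂ : ℝ} (hK : 0 ≤ K) (hD₁ : 0 < D₁)
    (hD₂ : 0 < D₂) (h : 0 ≤ N₂ * D₁ - N₁ * D₂) : K * N₁ / D₁ ≤ K * N₂ / D₂ := by
  rw [div_le_div_iff₀ hD₁ hD₂]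
  nlinarith [mul_nonneg hK h]

section

variable (α b : ℝ)

noncomputable def critQuad (z : ℝ) : ℝ := α * b * z ^ 2 - (b - 1 / b) * z - α / b

lemma one_sub_two_mul_add_sq_pos (hα : α ^ 2 < 1) (z : ℝ) : 0 < 1 - 2 * α * z + z ^ 2 := by
  nlinarith [sq_nonneg (z - α)]

lemma hasDerivAt_quadratic_ratio (hα : α ^ 2 < 1) (z : ℝ) :
    HasDerivAt (fun z => (1 - α ^ 2) * (1 / b + b * z ^ 2) / (1 - 2 * α * z + z ^ 2))
      (-2 * (1 - α ^ 2) * critQuad α b z / (1 - 2 * α * z + z ^ 2) ^ 2) z := by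
  have hsq : HasDerivAt (fun z : ℝ => z ^ 2) (2 * z) z := by simpa using hasDerivAt_pow 2 z
  have hN : HasDerivAt (fun z => (1 - α ^ 2) * (1 / b + b * z ^ 2))
      ((1 - α ^ 2) * (b * (2 * z))) z := ((hsq.const_mul b).const_add (1 / b)).const_mul _
  have hD : HasDerivAt (fun z => 1 - 2 * α * z + z ^ 2) (-(2 * α * 1) + 2 * z) z :=
    (((hasDerivAt_id z).const_mul (2 * α)).const_sub 1).add hsq
  refine (hN.div hD (one_sub_two_mul_add_sq_pos α hα z).ne').congr_deriv ?_
  unfold critQuad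
  ring

lemma deriv_quadratic_ratio_eq_zero_iff (hα : α ^ 2 < 1) (z : ℝ) :
    deriv (fun z => (1 - α ^ 2) * (1 / b + b * z ^ 2) / (1 - 2 * α * z + z ^ 2)) z = 0 ↔
      critQuad α b z = 0 := by
  have hD := (one_sub_two_mul_add_sq_pos α hα z).ne'
  have hK : 1 - α ^ 2 ≠ 0 := by linarith
  rw [(hasDerivAt_quadratic_ratio α b hα z).deriv]
  simp [hD, hK]

lemma critQuad_eq_zero_iff (hα : α ≠ 0) (hb : b ≠ 0) (z : ℝ) :
    critQuad α b z = 0 ↔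
      z = (b - 1 / b - √((b - 1 / b) ^ 2 + 4 * α ^ 2)) / (2 * α * b) ∨
        z = (b - 1 / b + √((b - 1 / b) ^ 2 + 4 * α ^ 2)) / (2 * α * b) := by
  have hdisc : discrim (α * b) (-(b - 1 / b)) (-(α / b)) =
      √((b - 1 / b) ^ 2 + 4 * α ^ 2) * √((b - 1 / b) ^ 2 + 4 * α ^ 2) := by
    rw [mul_self_sqrt (by positivity), discrim]
    field_simp
    ring
  rw [or_comm, critQuad]
  convert quadratic_eq_zero_iff (mul_ne_zero hα hb) hdisc z using 3 <;> ring

lemma cross_eq_of_critQuad_eq_zero {w : ℝ} (hw : critQuad α b w = 0) (z : ℝ) :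
    (1 / b + b * z ^ 2) * (1 - 2 * α * w + w ^ 2) - (1 / b + b * w ^ 2) * (1 - 2 * α * z + z ^ 2) =
      (b - 1 / b - 2 * α * b * w) * (z - w) ^ 2 := by
  unfold critQuad at hw
  linear_combination -2 * (z - w) * hw

end

theorem stmt13 (α b : ℝ) (hα0 : 0 < α) (hα1 : α < 1) (hb : 0 < b) :
    let g : ℝ → ℝ := fun z => (1 - α ^ 2) * (1 / b + b * z ^ 2) / (1 - 2 * α * z + z ^ 2)
    let zm : ℝ := (b - 1 / b - Real.sqrt ((b - 1 / b) ^ 2 + 4 * α ^ 2)) / (2 * α * b)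
    let zp : ℝ := (b - 1 / b + Real.sqrt ((b - 1 / b) ^ 2 + 4 * α ^ 2)) / (2 * α * b)
    (∀ z : ℝ, deriv g z = 0 ↔ z = zm ∨ z = zp) ∧
    zm < 0 ∧ 0 < zp ∧
    (∀ z : ℝ, g zm ≤ g z) ∧ (∀ z : ℝ, g z ≤ g zp) := by
  intro g zm zp
  have hα2 : α ^ 2 < 1 := by nlinarith
  have hD := one_sub_two_mul_add_sq_pos α hα2
  have hcrit := critQuad_eq_zero_iff α b hα0.ne' hb.ne'
  have hs := abs_lt_sqrt_sq_add (b - 1 / b) (by positivity : (0 : ℝ) < 4 * α ^ 2)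
  have h2ab : 2 * α * b ≠ 0 := by positivity
  have hslope_m : b - 1 / b - 2 * α * b * zm = √((b - 1 / b) ^ 2 + 4 * α ^ 2) := by
    rw [mul_div_cancel₀ _ h2ab]; ring
  have hslope_p : b - 1 / b - 2 * α * b * zp = -√((b - 1 / b) ^ 2 + 4 * α ^ 2) := by
    rw [mul_div_cancel₀ _ h2ab]; ring
  refine ⟨fun z => (deriv_quadratic_ratio_eq_zero_iff α b hα2 z).trans (hcrit z),
    div_neg_of_neg_of_pos (by linarith [(abs_lt.mp hs).2]) (by positivity),
    div_pos (by linarith [(abs_lt.mp hs).1]) (by positivity), fun z => ?_, fun z => ?_⟩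
  · refine mul_div_le_mul_div_of_sub_nonneg (by linarith) (hD zm) (hD z) ?_
    rw [cross_eq_of_critQuad_eq_zero α b ((hcrit zm).2 (Or.inl rfl)), hslope_m]
    positivity
  · refine mul_div_le_mul_div_of_sub_nonneg (by linarith) (hD z) (hD zp) ?_
    rw [← neg_sub, cross_eq_of_critQuad_eq_zero α b ((hcrit zp).2 (Or.inr rfl)), hslope_p,
      neg_mul, neg_neg]
    positivity
end

section
/- Let C ∈ ℂ^{2×2} be diagonalizable and positive stable with eigenvalues λ₁ ≠ λ₂, eigenvector angle cosine α = |⟨v₁/‖v₁‖, v₂/‖v₂‖⟩| ∈ [0,1), γ := Re(λ₂−λ₁), δ := Im(λ₂−λ₁). Then every solution of f' = −Cf satisfies h₋(t)‖f(0)‖₂² ≤ ‖f(t)‖₂² ≤ h₊(t)‖f(0)‖₂² for all t ≥ 0, where h_±(t) = e^{−2Re λ₁ t} m_±(t) and m_±(t) = ±e^{−γt}( √( (cosh(γt) − α² cos(δt))²/(1−α²)² − 1 ) ± (cosh(γt) − α² cos(δt))/(1−α²) ). -/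
/-!
Expand `f 0 = a • v₁ + b • v₂` in the eigenbasis, so that
`f t = e^{-λ₁t} • (a • v₁ + (z * b) • v₂)` with `z = e^{-(λ₂-λ₁)t}`. Writing
`w = conj a * b * ⟪v₁, v₂⟫`, which has `|w| ≤ α |a| |b|`,
`μ ‖a v₁ + b v₂‖² - ‖a v₁ + z b v₂‖² = (μ - 1)|a|² + (μ - |z|²)|b|² - 2 Re (w (z - μ))`,
so by AM-GM this is `≥ 0` for all `a, b` as soon as `μ ≥ 1, |z|²` and
`α² |z - μ|² ≤ (μ - 1)(μ - |z|²)` (and `≤ 0` in the mirror situation). For `μ = e^{-γt} m`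
the last condition is an equality exactly when `m² - 2pm + 1 = 0`, where
`p = (cosh γt - α² cos δt) / (1 - α²)`; its roots `p ± √(p² - 1)` are the two values `m₊, m₋`
of the statement, and `p ≥ cosh γt` puts `e^{±γt}` between them, which gives the sign conditions.
-/

open Matrix Complex Finset
open ComplexConjugate

theorem Module.End.exists_eq_smul_add_smul_of_hasEigenvector {K V : Type*} [Field K]
    [AddCommGroup V] [Module K V] (hV : Module.finrank K V = 2) {T : Module.End K V}
    {μ₁ μ₂ : K} {v₁ v₂ : V} (h₁ : T.HasEigenvector μ₁ v₁) (h₂ : T.HasEigenvector μ₂ v₂)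
    (hμ : μ₁ ≠ μ₂) (x : V) : ∃ a b : K, x = a • v₁ + b • v₂ := by
  have hli : LinearIndependent K ![v₁, v₂] :=
    T.eigenvectors_linearIndependent' ![μ₁, μ₂]
      (by simpa [Function.Injective, Fin.forall_fin_two] using ⟨hμ, hμ.symm⟩) _
      (by simpa [Fin.forall_fin_two] using ⟨h₁, h₂⟩)
  have hspan := hli.span_eq_top_of_card_eq_finrank (by simp [hV])
  rw [Matrix.range_cons_cons_empty] at hspan
  obtain ⟨a, b, hab⟩ := Submodule.mem_span_pair.mp (hspan ▸ Submodule.mem_top : x ∈ _)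
  exact ⟨a, b, hab.symm⟩

theorem Matrix.hasEigenvector_mulVecLin {ι : Type*} [Fintype ι] {C : Matrix ι ι ℂ} {μ : ℂ}
    {v : ι → ℂ} (hv : C *ᵥ v = μ • v) (hv₀ : v ≠ 0) : Module.End.HasEigenvector C.mulVecLin μ v :=
  ⟨Module.End.mem_eigenspace_iff.mpr hv, hv₀⟩

section LinearODE

variable {ι : Type*} [Fintype ι] {C : Matrix ι ι ℂ}

theorem eq_of_hasDerivAt_neg_mulVec {f g : ℝ → ι → ℂ}
    (hf : ∀ t, HasDerivAt f (-(C *ᵥ f t)) t) (hg : ∀ t, HasDerivAt g (-(C *ᵥ g t)) t)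
    (h₀ : f 0 = g 0) : f = g := by
  set L := LinearMap.toContinuousLinearMap (-C).mulVecLin
  have hL (x : ι → ℂ) : -(C *ᵥ x) = L x := by simp [L]
  exact ODE_solution_unique_univ (v := fun _ ↦ L) (s := fun _ ↦ Set.univ)
    (fun _ ↦ L.lipschitz.lipschitzOnWith) (fun t ↦ ⟨hL _ ▸ hf t, trivial⟩)
    (fun t ↦ ⟨hL _ ▸ hg t, trivial⟩) h₀

theorem hasDerivAt_cexp_smul_of_mulVec_eq {μ : ℂ} {v : ι → ℂ} (hv : C *ᵥ v = μ • v) (t : ℝ) :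
    HasDerivAt (fun s : ℝ ↦ cexp (-(μ * s)) • v) (-(C *ᵥ (cexp (-(μ * t)) • v))) t := by
  have h := ((((hasDerivAt_id (t : ℂ)).const_mul μ).neg.cexp).comp_ofReal).smul_const v
  refine h.congr_deriv ?_
  rw [Matrix.mulVec_smul, hv, smul_smul]
  simp [mul_comm]

theorem eq_cexp_smul_add_cexp_smul_of_hasDerivAt {μ₁ μ₂ : ℂ} {v₁ v₂ : ι → ℂ}
    (h₁ : C *ᵥ v₁ = μ₁ • v₁) (h₂ : C *ᵥ v₂ = μ₂ • v₂) {f : ℝ → ι → ℂ}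
    (hf : ∀ t, HasDerivAt f (-(C *ᵥ f t)) t) {a b : ℂ} (h₀ : f 0 = a • v₁ + b • v₂) (t : ℝ) :
    f t = cexp (-(μ₁ * t)) • a • v₁ + cexp (-(μ₂ * t)) • b • v₂ := by
  have hg (s : ℝ) := (hasDerivAt_cexp_smul_of_mulVec_eq (v := a • v₁)
    (by rw [mulVec_smul, h₁, smul_comm]) s).add
    (hasDerivAt_cexp_smul_of_mulVec_eq (v := b • v₂) (by rw [mulVec_smul, h₂, smul_comm]) s)
  refine congrFun (eq_of_hasDerivAt_neg_mulVec hf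
    (fun s ↦ (hg s).congr_deriv (by rw [Pi.add_apply, mulVec_add, neg_add])) ?_) t
  simp [h₀]

end LinearODE

theorem two_mul_mul_le_of_sq_le_mul {a d c : ℝ} (ha : 0 ≤ a) (hd : 0 ≤ d) (h : c ^ 2 ≤ a * d)
    (x y : ℝ) : 2 * c * x * y ≤ a * x ^ 2 + d * y ^ 2 := by
  rcases ha.eq_or_lt with rfl | ha
  · obtain rfl : c = 0 := by nlinarith
    nlinarith
  · have : 0 ≤ a * (a * x ^ 2 + d * y ^ 2 - 2 * c * x * y) := by
      nlinarith [sq_nonneg (a * x - c * y), mul_nonneg (sub_nonneg.2 h) (sq_nonneg y)]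
    nlinarith [(mul_nonneg_iff_of_pos_left ha).1 this]

theorem two_mul_re_mul_le {w ζ : ℂ} {α x y A D : ℝ} (hw : ‖w‖ ≤ α * (x * y))
    (hA : 0 ≤ A) (hD : 0 ≤ D) (h : α ^ 2 * ‖ζ‖ ^ 2 ≤ A * D) :
    2 * (w * ζ).re ≤ A * x ^ 2 + D * y ^ 2 := calc
  2 * (w * ζ).re ≤ 2 * (‖w‖ * ‖ζ‖) := by
    gcongr; exact (re_le_norm _).trans (norm_mul w ζ).le
  _ ≤ 2 * (α * ‖ζ‖) * x * y := by nlinarith [norm_nonneg ζ]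
  _ ≤ A * x ^ 2 + D * y ^ 2 := two_mul_mul_le_of_sq_le_mul hA hD (by rwa [mul_pow]) x y

section TwoModes

variable {ι : Type*} [Fintype ι]

theorem sum_norm_sq_smul (c : ℂ) (x : ι → ℂ) :
    ∑ i, ‖(c • x) i‖ ^ 2 = ‖c‖ ^ 2 * ∑ i, ‖x i‖ ^ 2 := by
  simp only [Pi.smul_apply, smul_eq_mul, norm_mul, mul_pow, Finset.mul_sum]

theorem sum_norm_sq_smul_add_smul (a b : ℂ) (v₁ v₂ : ι → ℂ) :
    ∑ i, ‖(a • v₁ + b • v₂) i‖ ^ 2 = ‖a‖ ^ 2 * ∑ i, ‖v₁ i‖ ^ 2 + ‖b‖ ^ 2 * ∑ i, ‖v₂ i‖ ^ 2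
      + 2 * (conj a * b * (star v₁ ⬝ᵥ v₂)).re := by
  simp only [dotProduct, Finset.mul_sum, Complex.re_sum, ← Finset.sum_add_distrib, Pi.add_apply,
    Pi.smul_apply, smul_eq_mul, Pi.star_apply, RCLike.star_def]
  refine Finset.sum_congr rfl fun i _ ↦ ?_
  simp only [← Complex.normSq_eq_norm_sq, Complex.normSq_add, Complex.normSq_mul]
  rw [← Complex.conj_re (a * v₁ i * _)]
  simp only [map_mul, Complex.conj_conj]
  ring_nf

variable {v₁ v₂ : ι → ℂ}

def IsTwoModeUpperBound (α : ℝ) (z : ℂ) (μ : ℝ) : Prop :=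
  1 ≤ μ ∧ ‖z‖ ^ 2 ≤ μ ∧ α ^ 2 * ‖z - μ‖ ^ 2 ≤ (μ - 1) * (μ - ‖z‖ ^ 2)

def IsTwoModeLowerBound (α : ℝ) (z : ℂ) (μ : ℝ) : Prop :=
  μ ≤ 1 ∧ μ ≤ ‖z‖ ^ 2 ∧ α ^ 2 * ‖z - μ‖ ^ 2 ≤ (1 - μ) * (‖z‖ ^ 2 - μ)

theorem mul_sum_norm_sq_sub_sum_norm_sq (h₁ : ∑ i, ‖v₁ i‖ ^ 2 = 1) (h₂ : ∑ i, ‖v₂ i‖ ^ 2 = 1)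
    (a b z : ℂ) (μ : ℝ) :
    μ * ∑ i, ‖(a • v₁ + b • v₂) i‖ ^ 2 - ∑ i, ‖(a • v₁ + (z * b) • v₂) i‖ ^ 2
      = (μ - 1) * ‖a‖ ^ 2 + (μ - ‖z‖ ^ 2) * ‖b‖ ^ 2
        - 2 * (conj a * b * (star v₁ ⬝ᵥ v₂) * (z - μ)).re := by
  rw [sum_norm_sq_smul_add_smul, sum_norm_sq_smul_add_smul, h₁, h₂, norm_mul, mul_pow, mul_sub,
    sub_re, mul_comm _ (μ : ℂ), re_ofReal_mul]
  ring_nf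

theorem norm_conj_mul_mul_dotProduct_le {α : ℝ} (hα : ‖star v₁ ⬝ᵥ v₂‖ ≤ α) (a b : ℂ) :
    ‖conj a * b * (star v₁ ⬝ᵥ v₂)‖ ≤ α * (‖a‖ * ‖b‖) := by
  rw [norm_mul, norm_mul, RCLike.norm_conj, mul_comm]
  gcongr

theorem sum_norm_sq_smul_add_mul_smul_le (h₁ : ∑ i, ‖v₁ i‖ ^ 2 = 1)
    (h₂ : ∑ i, ‖v₂ i‖ ^ 2 = 1) {α : ℝ} (hα : ‖star v₁ ⬝ᵥ v₂‖ ≤ α) {z : ℂ} {μ : ℝ}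
    (h : IsTwoModeUpperBound α z μ) (a b : ℂ) :
    ∑ i, ‖(a • v₁ + (z * b) • v₂) i‖ ^ 2 ≤ μ * ∑ i, ‖(a • v₁ + b • v₂) i‖ ^ 2 := by
  obtain ⟨h1μ, hzμ, hdet⟩ := h
  have := two_mul_re_mul_le (ζ := z - μ) (norm_conj_mul_mul_dotProduct_le hα a b)
    (sub_nonneg.2 h1μ) (sub_nonneg.2 hzμ) hdet
  linarith [mul_sum_norm_sq_sub_sum_norm_sq h₁ h₂ a b z μ]

theorem mul_sum_norm_sq_le_sum_norm_sq_smul_add_mul_smul (h₁ : ∑ i, ‖v₁ i‖ ^ 2 = 1)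
    (h₂ : ∑ i, ‖v₂ i‖ ^ 2 = 1) {α : ℝ} (hα : ‖star v₁ ⬝ᵥ v₂‖ ≤ α) {z : ℂ} {μ : ℝ}
    (h : IsTwoModeLowerBound α z μ) (a b : ℂ) :
    μ * ∑ i, ‖(a • v₁ + b • v₂) i‖ ^ 2 ≤ ∑ i, ‖(a • v₁ + (z * b) • v₂) i‖ ^ 2 := by
  obtain ⟨hμ1, hμz, hdet⟩ := h
  have := two_mul_re_mul_le (ζ := μ - z) (norm_conj_mul_mul_dotProduct_le hα a b)
    (sub_nonneg.2 hμ1) (sub_nonneg.2 hμz) (by rwa [norm_sub_rev])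
  rw [← neg_sub, mul_neg, neg_re] at this
  linarith [mul_sum_norm_sq_sub_sum_norm_sq h₁ h₂ a b z μ]

end TwoModes

theorem mem_Icc_sub_sqrt_add_sqrt_of_sq_sub_le {p x : ℝ} (h : x ^ 2 - 2 * p * x + 1 ≤ 0) :
    x ∈ Set.Icc (p - √(p ^ 2 - 1)) (p + √(p ^ 2 - 1)) := by
  have := abs_le.1 (Real.abs_le_sqrt (show (x - p) ^ 2 ≤ p ^ 2 - 1 by linarith))
  constructor <;> linarith

theorem Real.exp_mem_Icc_of_cosh_le {s p : ℝ} (h : Real.cosh s ≤ p) :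
    Real.exp s ∈ Set.Icc (p - √(p ^ 2 - 1)) (p + √(p ^ 2 - 1)) := by
  refine mem_Icc_sub_sqrt_add_sqrt_of_sq_sub_le ?_
  have hexp : Real.exp s * Real.exp (-s) = 1 := by
    rw [← Real.exp_add, add_neg_cancel, Real.exp_zero]
  have : Real.exp s ^ 2 - 2 * p * Real.exp s + 1 = 2 * Real.exp s * (Real.cosh s - p) := by
    rw [Real.cosh_eq]; linear_combination -hexp
  rw [this]
  exact mul_nonpos_of_nonneg_of_nonpos (by positivity) (by linarith)

theorem cosh_le_of_one_sub_sq_mul_eq {α p s θ : ℝ} (hα : α ^ 2 < 1)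
    (hp : (1 - α ^ 2) * p = Real.cosh s - α ^ 2 * Real.cos θ) : Real.cosh s ≤ p := by
  nlinarith [Real.cos_le_one θ, Real.one_le_cosh s, sq_nonneg α]

theorem sq_mul_norm_sq_cexp_sub_eq {α p m : ℝ} (w : ℂ)
    (hp : (1 - α ^ 2) * p = Real.cosh w.re - α ^ 2 * Real.cos w.im) (hm : (m - p) ^ 2 = p ^ 2 - 1) :
    α ^ 2 * ‖cexp (-w) - ↑(Real.exp (-w.re) * m)‖ ^ 2
      = (Real.exp (-w.re) * m - 1) * (Real.exp (-w.re) * m - ‖cexp (-w)‖ ^ 2) := by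
  have hexp : Real.exp w.re * Real.exp (-w.re) = 1 := by
    rw [← Real.exp_add, add_neg_cancel, Real.exp_zero]
  rw [← Complex.normSq_eq_norm_sq, Complex.normSq_apply, Complex.norm_exp, sub_re, sub_im,
    exp_re, exp_im, ofReal_re, ofReal_im, neg_re, neg_im, Real.cos_neg, Real.sin_neg]
  rw [Real.cosh_eq] at hp
  linear_combination α ^ 2 * Real.exp (-w.re) ^ 2 * Real.sin_sq_add_cos_sq w.im
    - (1 - α ^ 2) * Real.exp (-w.re) ^ 2 * hm - 2 * m * Real.exp (-w.re) ^ 2 * hp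
    - m * Real.exp (-w.re) * hexp

theorem isTwoModeUpperBound_cexp_neg {α p : ℝ} (hα : α ^ 2 < 1) (w : ℂ)
    (hp : (1 - α ^ 2) * p = Real.cosh w.re - α ^ 2 * Real.cos w.im) :
    IsTwoModeUpperBound α (cexp (-w)) (Real.exp (-w.re) * (p + √(p ^ 2 - 1))) := by
  have hcosh := cosh_le_of_one_sub_sq_mul_eq hα hp
  have hpos := (Real.exp_mem_Icc_of_cosh_le hcosh).2
  have hneg := (Real.exp_mem_Icc_of_cosh_le (Real.cosh_neg w.re ▸ hcosh)).2
  have hexp : Real.exp (-w.re) * Real.exp w.re = 1 := by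
    rw [← Real.exp_add, neg_add_cancel, Real.exp_zero]
  have hid := sq_mul_norm_sq_cexp_sub_eq w hp (m := p + √(p ^ 2 - 1)) (by
    rw [add_sub_cancel_left, Real.sq_sqrt (by nlinarith [Real.one_le_cosh w.re])])
  rw [Complex.norm_exp, neg_re] at hid
  rw [IsTwoModeUpperBound, Complex.norm_exp, neg_re]
  refine ⟨hexp.symm.le.trans (by gcongr), ?_, hid.le⟩
  rw [sq (Real.exp _)]
  gcongr

theorem isTwoModeLowerBound_cexp_neg {α p : ℝ} (hα : α ^ 2 < 1) (w : ℂ)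
    (hp : (1 - α ^ 2) * p = Real.cosh w.re - α ^ 2 * Real.cos w.im) :
    IsTwoModeLowerBound α (cexp (-w)) (Real.exp (-w.re) * (p - √(p ^ 2 - 1))) := by
  have hcosh := cosh_le_of_one_sub_sq_mul_eq hα hp
  have hpos := (Real.exp_mem_Icc_of_cosh_le hcosh).1
  have hneg := (Real.exp_mem_Icc_of_cosh_le (Real.cosh_neg w.re ▸ hcosh)).1
  have hexp : Real.exp (-w.re) * Real.exp w.re = 1 := by
    rw [← Real.exp_add, neg_add_cancel, Real.exp_zero]
  have hid := sq_mul_norm_sq_cexp_sub_eq w hp (m := p - √(p ^ 2 - 1)) (by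
    rw [sub_sub_cancel_left, neg_sq, Real.sq_sqrt (by nlinarith [Real.one_le_cosh w.re])])
  rw [Complex.norm_exp, neg_re] at hid
  rw [IsTwoModeLowerBound, Complex.norm_exp, neg_re]
  refine ⟨le_trans (by gcongr) hexp.le, ?_, (hid.trans (by ring)).le⟩
  rw [sq (Real.exp _)]
  gcongr

theorem stmt14_general (C : Matrix (Fin 2) (Fin 2) ℂ) (lam1 lam2 : ℂ) (v1 v2 : Fin 2 → ℂ) (α : ℝ)
    (hv1 : v1 ≠ 0) (hv2 : v2 ≠ 0)
    (he1 : C.mulVec v1 = lam1 • v1) (he2 : C.mulVec v2 = lam2 • v2)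
    (hne : lam1 ≠ lam2)
    (hn1 : Real.sqrt (∑ i, ‖v1 i‖ ^ 2) = 1) (hn2 : Real.sqrt (∑ i, ‖v2 i‖ ^ 2) = 1)
    (hα : α = ‖star v1 ⬝ᵥ v2‖) (hα1 : α < 1)
    (f : ℝ → Fin 2 → ℂ) (hf : ∀ t : ℝ, HasDerivAt f (-(C.mulVec (f t))) t) :
    ∀ t : ℝ, 0 ≤ t →
      let γ : ℝ := (lam2 - lam1).re
      let δ : ℝ := (lam2 - lam1).im
      let q : ℝ := Real.cosh (γ * t) - α ^ 2 * Real.cos (δ * t)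
      let mp : ℝ := Real.exp (-γ * t) *
        (Real.sqrt (q ^ 2 / (1 - α ^ 2) ^ 2 - 1) + q / (1 - α ^ 2))
      let mm : ℝ := -(Real.exp (-γ * t) *
        (Real.sqrt (q ^ 2 / (1 - α ^ 2) ^ 2 - 1) - q / (1 - α ^ 2)))
      Real.exp (-(2 * lam1.re) * t) * mm * ∑ i, ‖f 0 i‖ ^ 2 ≤ ∑ i, ‖f t i‖ ^ 2 ∧
      ∑ i, ‖f t i‖ ^ 2 ≤ Real.exp (-(2 * lam1.re) * t) * mp * ∑ i, ‖f 0 i‖ ^ 2 := by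
  intro t _ γ δ q mp mm
  obtain ⟨a, b, hab⟩ := Module.End.exists_eq_smul_add_smul_of_hasEigenvector (by simp)
    (Matrix.hasEigenvector_mulVecLin he1 hv1) (Matrix.hasEigenvector_mulVecLin he2 hv2) hne (f 0)
  set w : ℂ := (lam2 - lam1) * t
  have hft : f t = cexp (-(lam1 * t)) • (a • v1 + (cexp (-w) * b) • v2) := by
    rw [eq_cexp_smul_add_cexp_smul_of_hasDerivAt he1 he2 hf hab, smul_add, smul_smul _ (_ * b),
      ← mul_assoc, ← Complex.exp_add, smul_smul (cexp _) b]
    simp only [w]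
    ring_nf
  have hnorm : ‖cexp (-(lam1 * t))‖ ^ 2 = Real.exp (-(2 * lam1.re) * t) := by
    rw [norm_exp, neg_re, re_mul_ofReal, ← Real.exp_nat_mul]
    ring_nf
  have hα2 : α ^ 2 < 1 := by nlinarith [hα ▸ norm_nonneg (star v1 ⬝ᵥ v2)]
  set p := q / (1 - α ^ 2)
  have hp : (1 - α ^ 2) * p = Real.cosh w.re - α ^ 2 * Real.cos w.im := by
    rw [mul_div_cancel₀ q (by linarith)]
    simp only [q, w, re_mul_ofReal, im_mul_ofReal, γ, δ]
  have hmp : mp = Real.exp (-w.re) * (p + √(p ^ 2 - 1)) := by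
    simp only [mp, p, w, γ, re_mul_ofReal, div_pow, neg_mul, add_comm]
  have hmm : mm = Real.exp (-w.re) * (p - √(p ^ 2 - 1)) := by
    simp only [mm, p, w, γ, re_mul_ofReal, div_pow, neg_mul, ← mul_neg, neg_sub]
  have h₁ := Real.sqrt_eq_one.mp hn1
  have h₂ := Real.sqrt_eq_one.mp hn2
  rw [hft, hab, sum_norm_sq_smul, hnorm, hmp, hmm, mul_assoc (Real.exp _),
    mul_assoc (Real.exp (-(2 * lam1.re) * t)) (_ * _)]
  exact ⟨mul_le_mul_of_nonneg_left (mul_sum_norm_sq_le_sum_norm_sq_smul_add_mul_smul h₁ h₂ hα.ge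
      (isTwoModeLowerBound_cexp_neg hα2 w hp) a b) (Real.exp_nonneg _),
    mul_le_mul_of_nonneg_left (sum_norm_sq_smul_add_mul_smul_le h₁ h₂ hα.ge
      (isTwoModeUpperBound_cexp_neg hα2 w hp) a b) (Real.exp_nonneg _)⟩

theorem stmt14 (C : Matrix (Fin 2) (Fin 2) ℂ) (lam1 lam2 : ℂ) (v1 v2 : Fin 2 → ℂ) (α : ℝ)
    (hv1 : v1 ≠ 0) (hv2 : v2 ≠ 0)
    (he1 : C.mulVec v1 = lam1 • v1) (he2 : C.mulVec v2 = lam2 • v2)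
    (hne : lam1 ≠ lam2) (hst1 : 0 < lam1.re) (hst2 : 0 < lam2.re)
    (hn1 : Real.sqrt (∑ i, ‖v1 i‖ ^ 2) = 1) (hn2 : Real.sqrt (∑ i, ‖v2 i‖ ^ 2) = 1)
    (hα : α = ‖star v1 ⬝ᵥ v2‖) (hα1 : α < 1)
    (f : ℝ → Fin 2 → ℂ) (hf : ∀ t : ℝ, HasDerivAt f (-(C.mulVec (f t))) t) :
    ∀ t : ℝ, 0 ≤ t →
      let γ : ℝ := (lam2 - lam1).re
      let δ : ℝ := (lam2 - lam1).im
      let q : ℝ := Real.cosh (γ * t) - α ^ 2 * Real.cos (δ * t)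
      let mp : ℝ := Real.exp (-γ * t) *
        (Real.sqrt (q ^ 2 / (1 - α ^ 2) ^ 2 - 1) + q / (1 - α ^ 2))
      let mm : ℝ := -(Real.exp (-γ * t) *
        (Real.sqrt (q ^ 2 / (1 - α ^ 2) ^ 2 - 1) - q / (1 - α ^ 2)))
      Real.exp (-(2 * lam1.re) * t) * mm * ∑ i, ‖f 0 i‖ ^ 2 ≤ ∑ i, ‖f t i‖ ^ 2 ∧
      ∑ i, ‖f t i‖ ^ 2 ≤ Real.exp (-(2 * lam1.re) * t) * mp * ∑ i, ‖f 0 i‖ ^ 2 :=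
  stmt14_general C lam1 lam2 v1 v2 α hv1 hv2 he1 he2 hne hn1 hn2 hα hα1 f hf
end

section
/- Let C ∈ ℂ^{2×2} be diagonalizable with all eigenvalues non-defective, Re λ₁ = μ ≤ Re λ₂, and let α ∈ [0,1) be the cosine of the angle between the normalized eigenvectors of C*. For μ_s ≤ μ̃ ≤ μ (μ_s the smallest eigenvalue of the Hermitian part of C), set β₀² = 4(Re λ₁ − μ̃)(Re λ₂ − μ̃)/|λ₁ + conj(λ₂) − 2μ̃|² (and β₀ = 1 if λ₁ = λ₂ and μ̃ = μ), and β̃ = max(−α, −β₀). Then every solution of f' = −Cf satisfies ‖f(t)‖₂ ≤ c₁(μ̃) e^{−μ̃ t} ‖f(0)‖₂ for all t ≥ 0, where c₁(μ̃)² = (1 + s)/(1 − s) with s = √(1 − (1−α²)(1−β̃²)/(1+αβ̃)²). -/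
open Matrix Complex Finset
open ComplexConjugate

/-!
Let `w₁, w₂` be the unit eigenvectors of `Cᴴ`. The coordinates `uₖ = wₖᴴ f` decouple,
`uₖ' = -λₖ uₖ`. Write `w₁ᴴ w₂ = α g` with `|g| = 1` and take the Lyapunov functional
`Q = |u₁|² + |u₂|² + 2 Re (β̃ g ū₁ u₂)`. Along solutions `(e^{2μ̃t} Q)' = -2 e^{2μ̃t} D`, where `D`
is the Hermitian form with diagonal `Re λₖ - μ̃` and off-diagonal entry `(λ̄₁ + λ₂ - 2μ̃) β̃ g / 2`;
by AM-GM, `D ≥ 0` as soon as `|β̃| ≤ β₀`, which is where `β₀` comes from.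
In the coordinates `f = x w₁ + y w₂`, both `‖f‖²` and `Q` are diagonalised by `x ± g y`, with
eigenvalue ratios `(1 ± α)(1 ± β̃)`; hence `(1-α)(1-β̃)‖f‖² ≤ Q ≤ (1+α)(1+β̃)‖f‖²`, and the
quotient of the two constants is `(1+s)/(1-s)`.
-/

def hermForm (b z₁ z₂ : ℂ) : ℝ := normSq z₁ + normSq z₂ + 2 * (b * conj z₁ * z₂).re

lemma hermForm_eq_re (b z₁ z₂ : ℂ) :
    hermForm b z₁ z₂ = (conj z₁ * z₁ + conj z₂ * z₂ + 2 * b * conj z₁ * z₂).re := by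
  simp only [hermForm, add_re, ← normSq_eq_conj_mul_self, ofReal_re, mul_assoc]
  simp [mul_re]

lemma hermForm_eq_of_norm_eq_one {g : ℂ} (hg : ‖g‖ = 1) (r : ℝ) (z₁ z₂ : ℂ) :
    hermForm (r * g) z₁ z₂ =
      ((1 + r) * normSq (z₁ + g * z₂) + (1 - r) * normSq (z₁ - g * z₂)) / 2 := by
  have hgz : normSq (g * z₂) = normSq z₂ := by
    rw [normSq_mul, normSq_eq_norm_sq, hg, one_pow, one_mul]
  have hre : (r * g * conj z₁ * z₂).re = r * (z₁ * conj (g * z₂)).re := by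
    rw [← re_ofReal_mul, ← conj_re]
    congr 1
    simp only [map_mul, conj_ofReal, conj_conj]
    ring
  rw [hermForm, normSq_add, normSq_sub, hgz, hre]
  ring

lemma hermForm_sandwich {g : ℂ} (hg : ‖g‖ = 1) {α β : ℝ} (hα : |α| ≤ 1) (hαβ : 0 ≤ α + β)
    (x y : ℂ) :
    (1 - α) * (1 - β) * hermForm (α * g) x y ≤
        hermForm (β * g) (x + α * g * y) (conj (α * g) * x + y) ∧
      hermForm (β * g) (x + α * g * y) (conj (α * g) * x + y) ≤
        (1 + α) * (1 + β) * hermForm (α * g) x y := by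
  obtain ⟨hα₁, hα₂⟩ := abs_le.1 hα
  have hgg : g * conj g = 1 := by rw [mul_conj, normSq_eq_norm_sq, hg]; simp
  have hp : x + α * g * y + g * (conj (α * g) * x + y) = ((1 + α : ℝ) : ℂ) * (x + g * y) := by
    simp only [map_mul, conj_ofReal]; push_cast; linear_combination (α : ℂ) * x * hgg
  have hq : x + α * g * y - g * (conj (α * g) * x + y) = ((1 - α : ℝ) : ℂ) * (x - g * y) := by
    simp only [map_mul, conj_ofReal]; push_cast; linear_combination -(α : ℂ) * x * hgg
  rw [hermForm_eq_of_norm_eq_one hg, hermForm_eq_of_norm_eq_one hg, hp, hq, normSq_mul,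
    normSq_mul, normSq_ofReal, normSq_ofReal]
  have hp₀ := normSq_nonneg (x + g * y)
  have hq₀ := normSq_nonneg (x - g * y)
  constructor
  · nlinarith [mul_nonneg (mul_nonneg hp₀ hαβ) (by linarith : 0 ≤ 1 + α)]
  · nlinarith [mul_nonneg (mul_nonneg hq₀ hαβ) (by linarith : 0 ≤ 1 - α)]

lemma dissipation_nonneg {a₁ a₂ : ℝ} {c b : ℂ} (ha₁ : 0 ≤ a₁) (ha₂ : 0 ≤ a₂)
    (h : ‖c‖ * ‖b‖ ≤ 2 * √(a₁ * a₂)) (z₁ z₂ : ℂ) :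
    0 ≤ a₁ * normSq z₁ + a₂ * normSq z₂ + (c * b * conj z₁ * z₂).re := by
  have hre : -(c * b * conj z₁ * z₂).re ≤ 2 * (√a₁ * ‖z₁‖) * (√a₂ * ‖z₂‖) :=
    calc -(c * b * conj z₁ * z₂).re ≤ ‖c * b * conj z₁ * z₂‖ :=
          neg_le.mp (abs_le.1 (abs_re_le_norm _)).1
      _ = ‖c‖ * ‖b‖ * (‖z₁‖ * ‖z₂‖) := by simp only [norm_mul, norm_conj]; ring
      _ ≤ 2 * √(a₁ * a₂) * (‖z₁‖ * ‖z₂‖) := by gcongr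
      _ = 2 * (√a₁ * ‖z₁‖) * (√a₂ * ‖z₂‖) := by rw [Real.sqrt_mul ha₁]; ring
  have h₁ : a₁ * normSq z₁ = (√a₁ * ‖z₁‖) ^ 2 := by
    rw [mul_pow, Real.sq_sqrt ha₁, normSq_eq_norm_sq]
  have h₂ : a₂ * normSq z₂ = (√a₂ * ‖z₂‖) ^ 2 := by
    rw [mul_pow, Real.sq_sqrt ha₂, normSq_eq_norm_sq]
  nlinarith [sq_nonneg (√a₁ * ‖z₁‖ - √a₂ * ‖z₂‖)]

lemma hasDerivAt_hermForm {u₁ u₂ : ℝ → ℂ} {κ₁ κ₂ : ℂ} {t : ℝ}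
    (h₁ : HasDerivAt u₁ (-(κ₁ * u₁ t)) t) (h₂ : HasDerivAt u₂ (-(κ₂ * u₂ t)) t) (b : ℂ) :
    HasDerivAt (fun t ↦ hermForm b (u₁ t) (u₂ t)) (-2 * (κ₁.re * normSq (u₁ t) +
      κ₂.re * normSq (u₂ t) + ((conj κ₁ + κ₂) * b * conj (u₁ t) * u₂ t).re)) t := by
  have hP := ((h₁.star.mul h₁).add (h₂.star.mul h₂)).add ((h₁.star.const_mul (2 * b)).mul h₂)
  simp only [hermForm_eq_re]
  refine (reCLM.hasFDerivAt.comp_hasDerivAt t hP).congr_deriv ?_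
  simp only [star_neg, star_mul', RCLike.star_def, neg_mul, mul_neg, reCLM_apply, add_re, neg_re,
    mul_re, conj_re, conj_im, neg_neg, mul_im, neg_sub, sub_neg_eq_add, neg_add_rev, re_ofNat,
    im_ofNat, zero_mul, sub_zero, add_zero, normSq_apply, add_im]
  ring

lemma antitone_exp_mul_hermForm {u₁ u₂ : ℝ → ℂ} {κ₁ κ₂ b : ℂ} {μ : ℝ}
    (h₁ : ∀ t, HasDerivAt u₁ (-(κ₁ * u₁ t)) t) (h₂ : ∀ t, HasDerivAt u₂ (-(κ₂ * u₂ t)) t)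
    (hμ₁ : μ ≤ κ₁.re) (hμ₂ : μ ≤ κ₂.re)
    (hb : ‖conj κ₁ + κ₂ - 2 * μ‖ * ‖b‖ ≤ 2 * √((κ₁.re - μ) * (κ₂.re - μ))) :
    Antitone fun t ↦ Real.exp (2 * μ * t) * hermForm b (u₁ t) (u₂ t) := by
  have hderiv : ∀ t, HasDerivAt (fun t ↦ Real.exp (2 * μ * t) * hermForm b (u₁ t) (u₂ t))
      (-2 * Real.exp (2 * μ * t) * ((κ₁.re - μ) * normSq (u₁ t) + (κ₂.re - μ) * normSq (u₂ t) +
        ((conj κ₁ + κ₂ - 2 * μ) * b * conj (u₁ t) * u₂ t).re)) t := by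
    intro t
    have hexp := ((hasDerivAt_id t).const_mul (2 * μ)).exp
    refine (hexp.fun_mul (hasDerivAt_hermForm (h₁ t) (h₂ t) b)).congr_deriv ?_
    simp only [id_eq, mul_one, hermForm, mul_re, conj_re, conj_im, mul_neg, sub_neg_eq_add, mul_im,
      add_re, add_im, neg_mul, sub_re, re_ofNat, ofReal_re, im_ofNat, ofReal_im, mul_zero, sub_zero,
      sub_im, zero_mul, add_zero]
    ring
  refine antitone_of_deriv_nonpos (fun t ↦ (hderiv t).differentiableAt) fun t ↦ ?_
  rw [(hderiv t).deriv]
  have hD := dissipation_nonneg (sub_nonneg.2 hμ₁) (sub_nonneg.2 hμ₂) hb (u₁ t) (u₂ t)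
  have hexp := Real.exp_pos (2 * μ * t)
  nlinarith

section
variable {n : Type*} [Fintype n]

lemma star_vecMul_eq_of_conjTranspose_mulVec {C : Matrix n n ℂ} {w : n → ℂ} {κ : ℂ}
    (hw : Cᴴ *ᵥ w = conj κ • w) : star w ᵥ* C = κ • star w := by
  simpa [star_mulVec, star_smul] using congrArg star hw

lemma hasDerivAt_star_dotProduct {C : Matrix n n ℂ} {w : n → ℂ} {κ : ℂ}
    (hw : Cᴴ *ᵥ w = conj κ • w) {f : ℝ → n → ℂ} {t : ℝ} (hf : HasDerivAt f (-(C *ᵥ f t)) t) :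
    HasDerivAt (fun t ↦ star w ⬝ᵥ f t) (-(κ * (star w ⬝ᵥ f t))) t := by
  have hsum : HasDerivAt (fun t ↦ star w ⬝ᵥ f t) (star w ⬝ᵥ -(C *ᵥ f t)) t :=
    HasDerivAt.fun_sum fun i _ ↦ (hasDerivAt_pi.1 hf i).const_mul (star w i)
  rwa [dotProduct_neg, dotProduct_mulVec, star_vecMul_eq_of_conjTranspose_mulVec hw,
    smul_dotProduct, smul_eq_mul] at hsum

lemma star_dotProduct_self_eq (v : n → ℂ) : star v ⬝ᵥ v = ((∑ i, ‖v i‖ ^ 2 : ℝ) : ℂ) := by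
  simp [dotProduct, conj_mul']

lemma linearIndependent_pair_of_norm_dotProduct_lt_one {w₁ w₂ : n → ℂ}
    (hw₁ : star w₁ ⬝ᵥ w₁ = 1) (hw₂ : star w₂ ⬝ᵥ w₂ = 1) (h : ‖star w₁ ⬝ᵥ w₂‖ < 1) :
    LinearIndependent ℂ ![w₁, w₂] := by
  refine LinearIndependent.pair_iff.2 fun s t hst ↦ ?_
  have h₁ : s + t * (star w₁ ⬝ᵥ w₂) = 0 := by
    simpa [dotProduct_add, dotProduct_smul, hw₁] using congrArg (star w₁ ⬝ᵥ ·) hst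
  have h₂ : s * conj (star w₁ ⬝ᵥ w₂) + t = 0 := by
    have := congrArg (star w₂ ⬝ᵥ ·) hst
    simp only [dotProduct_add, dotProduct_smul, hw₂, dotProduct_zero, smul_eq_mul,
      mul_one] at this
    rwa [star_dotProduct] at this
  have hγ : normSq (star w₁ ⬝ᵥ w₂) ≠ 1 := by
    rw [normSq_eq_norm_sq]; nlinarith [norm_nonneg (star w₁ ⬝ᵥ w₂)]
  have ht : t * (1 - normSq (star w₁ ⬝ᵥ w₂) : ℂ) = 0 := by
    rw [normSq_eq_conj_mul_self]; linear_combination h₂ - conj (star w₁ ⬝ᵥ w₂) * h₁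
  have ht₀ : t = 0 := by
    refine (mul_eq_zero.1 ht).resolve_right fun h ↦ hγ ?_
    exact_mod_cast (sub_eq_zero.1 h).symm
  exact ⟨by simpa [ht₀] using h₁, ht₀⟩

lemma star_dotProduct_smul_add_smul (w w₁ w₂ : n → ℂ) (x y : ℂ) :
    star w ⬝ᵥ (x • w₁ + y • w₂) = x * (star w ⬝ᵥ w₁) + y * (star w ⬝ᵥ w₂) := by
  simp [dotProduct_add, dotProduct_smul]

lemma re_star_dotProduct_smul_add_smul {w₁ w₂ : n → ℂ} (hw₁ : star w₁ ⬝ᵥ w₁ = 1)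
    (hw₂ : star w₂ ⬝ᵥ w₂ = 1) (x y : ℂ) :
    (star (x • w₁ + y • w₂) ⬝ᵥ (x • w₁ + y • w₂)).re = hermForm (star w₁ ⬝ᵥ w₂) x y := by
  have h₂₁ : star w₂ ⬝ᵥ w₁ = conj (star w₁ ⬝ᵥ w₂) := star_dotProduct _ _
  simp only [star_add, star_smul, add_dotProduct, smul_dotProduct, dotProduct_add,
    dotProduct_smul, hw₁, hw₂, h₂₁, smul_eq_mul, hermForm]
  simp only [star_def, mul_one, add_re, add_im, mul_re, mul_im, conj_re, conj_im, normSq_apply]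
  ring

end

lemma exists_eq_smul_add_smul_of_norm_dotProduct_lt_one {w₁ w₂ : Fin 2 → ℂ}
    (hw₁ : star w₁ ⬝ᵥ w₁ = 1) (hw₂ : star w₂ ⬝ᵥ w₂ = 1) (h : ‖star w₁ ⬝ᵥ w₂‖ < 1)
    (v : Fin 2 → ℂ) : ∃ x y : ℂ, v = x • w₁ + y • w₂ := by
  have hspan := (linearIndependent_pair_of_norm_dotProduct_lt_one hw₁ hw₂ h
    ).span_eq_top_of_card_eq_finrank' (by simp)
  obtain ⟨c, hc⟩ :=
    (Submodule.mem_span_range_iff_exists_fun ℂ).1 (hspan ▸ Submodule.mem_top (x := v))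
  exact ⟨c 0, c 1, by simpa [Fin.sum_univ_two] using hc.symm⟩

lemma hermForm_star_dotProduct_sandwich {w₁ w₂ : Fin 2 → ℂ} (hw₁ : star w₁ ⬝ᵥ w₁ = 1)
    (hw₂ : star w₂ ⬝ᵥ w₂ = 1) {g : ℂ} (hg : ‖g‖ = 1) {α β : ℝ}
    (hγ : star w₁ ⬝ᵥ w₂ = α * g) (hα : |α| < 1) (hαβ : 0 ≤ α + β) (v : Fin 2 → ℂ) :
    (1 - α) * (1 - β) * ∑ i, ‖v i‖ ^ 2 ≤ hermForm (β * g) (star w₁ ⬝ᵥ v) (star w₂ ⬝ᵥ v) ∧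
      hermForm (β * g) (star w₁ ⬝ᵥ v) (star w₂ ⬝ᵥ v) ≤ (1 + α) * (1 + β) * ∑ i, ‖v i‖ ^ 2 := by
  have hγ₁ : ‖star w₁ ⬝ᵥ w₂‖ < 1 := by
    rwa [hγ, norm_mul, hg, mul_one, norm_real, Real.norm_eq_abs]
  obtain ⟨x, y, rfl⟩ := exists_eq_smul_add_smul_of_norm_dotProduct_lt_one hw₁ hw₂ hγ₁ v
  have hN : ∑ i, ‖(x • w₁ + y • w₂) i‖ ^ 2 = hermForm (α * g) x y := by
    rw [← hγ, ← re_star_dotProduct_smul_add_smul hw₁ hw₂, star_dotProduct_self_eq, ofReal_re]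
  have h₂₁ : star w₂ ⬝ᵥ w₁ = conj (star w₁ ⬝ᵥ w₂) := star_dotProduct _ _
  rw [hN, star_dotProduct_smul_add_smul, star_dotProduct_smul_add_smul, hw₁, hw₂, h₂₁, hγ]
  convert hermForm_sandwich hg hα.le hαβ x y using 3 <;> ring

lemma one_add_sqrt_div_one_sub_sqrt {α β : ℝ} (hαβ : 0 ≤ α + β) (h : 0 < 1 + α * β) :
    (1 + √(1 - (1 - α ^ 2) * (1 - β ^ 2) / (1 + α * β) ^ 2)) /
        (1 - √(1 - (1 - α ^ 2) * (1 - β ^ 2) / (1 + α * β) ^ 2)) =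
      (1 + α) * (1 + β) / ((1 - α) * (1 - β)) := by
  have hs : 1 - (1 - α ^ 2) * (1 - β ^ 2) / (1 + α * β) ^ 2 = ((α + β) / (1 + α * β)) ^ 2 := by
    field_simp; ring
  have hplus : 1 + (α + β) / (1 + α * β) = (1 + α) * (1 + β) / (1 + α * β) := by
    field_simp; ring
  have hminus : 1 - (α + β) / (1 + α * β) = (1 - α) * (1 - β) / (1 + α * β) := by
    field_simp; ring
  rw [hs, Real.sqrt_sq (div_nonneg hαβ h.le), hplus, hminus, div_div_div_cancel_right₀ h.ne']

lemma norm_mul_le_two_sqrt_of_le {c : ℂ} {a₁ a₂ β : ℝ}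
    (hβ : β ≤ if c = 0 then 1 else √(4 * a₁ * a₂ / ‖c‖ ^ 2)) : ‖c‖ * β ≤ 2 * √(a₁ * a₂) := by
  split_ifs at hβ with hc
  · simp [hc]
  calc ‖c‖ * β ≤ ‖c‖ * √(4 * a₁ * a₂ / ‖c‖ ^ 2) := by gcongr
    _ = 2 * √(a₁ * a₂) := by
      rw [show 4 * a₁ * a₂ / ‖c‖ ^ 2 = (2 / ‖c‖) ^ 2 * (a₁ * a₂) by ring,
        Real.sqrt_mul (sq_nonneg _), Real.sqrt_sq (by positivity)]
      field_simp

lemma sqrt_le_of_sandwich_of_antitone {N Q : ℝ → ℝ} {m M κ : ℝ} (hm : 0 < m) (hM : 0 ≤ M)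
    (hlow : ∀ t, m * N t ≤ Q t) (hup : ∀ t, Q t ≤ M * N t)
    (hQ : Antitone fun t ↦ Real.exp (2 * κ * t) * Q t) {t : ℝ} (ht : 0 ≤ t) :
    √(N t) ≤ √(M / m) * Real.exp (-κ * t) * √(N 0) := by
  have hexp : Real.exp (2 * κ * t) * Real.exp (-κ * t) ^ 2 = 1 := by
    rw [← Real.exp_nat_mul, ← Real.exp_add, Real.exp_eq_one_iff]
    push_cast
    ring
  have hdecay : Real.exp (2 * κ * t) * Q t ≤ Q 0 := by simpa using hQ ht
  have hN : N t ≤ M / m * Real.exp (-κ * t) ^ 2 * N 0 := by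
    rw [div_mul_eq_mul_div, div_mul_eq_mul_div, le_div_iff₀ hm]
    calc N t * m ≤ Q t := by linarith [hlow t]
      _ = Real.exp (-κ * t) ^ 2 * (Real.exp (2 * κ * t) * Q t) := by
        rw [← mul_assoc, mul_comm _ (Real.exp _), hexp, one_mul]
      _ ≤ Real.exp (-κ * t) ^ 2 * (M * N 0) :=
          mul_le_mul_of_nonneg_left (hdecay.trans (hup 0)) (by positivity)
      _ = M * Real.exp (-κ * t) ^ 2 * N 0 := by ring
  calc √(N t) ≤ √(M / m * Real.exp (-κ * t) ^ 2 * N 0) := Real.sqrt_le_sqrt hN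
    _ = √(M / m) * Real.exp (-κ * t) * √(N 0) := by
      rw [Real.sqrt_mul (by positivity), Real.sqrt_mul (div_nonneg hM hm.le),
        Real.sqrt_sq (Real.exp_nonneg _)]

theorem stmt17_general (C : Matrix (Fin 2) (Fin 2) ℂ) (lam1 lam2 : ℂ)
    (w1 w2 : Fin 2 → ℂ) (α μ μt : ℝ)
    (he1 : Cᴴ.mulVec w1 = (starRingEnd ℂ) lam1 • w1)
    (he2 : Cᴴ.mulVec w2 = (starRingEnd ℂ) lam2 • w2)
    (hn1 : Real.sqrt (∑ i, ‖w1 i‖ ^ 2) = 1) (hn2 : Real.sqrt (∑ i, ‖w2 i‖ ^ 2) = 1)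
    (hα : α = ‖star w1 ⬝ᵥ w2‖) (hα0 : 0 ≤ α) (hα1 : α < 1)
    (hμ : lam1.re = μ) (hle : μ ≤ lam2.re)
    (hμt2 : μt ≤ μ)
    (f : ℝ → Fin 2 → ℂ) (hf : ∀ t : ℝ, HasDerivAt f (-(C.mulVec (f t))) t) :
    let β0 : ℝ := if lam1 + (starRingEnd ℂ) lam2 - 2 * (μt : ℂ) = 0 then 1 else
      Real.sqrt (4 * (lam1.re - μt) * (lam2.re - μt) /
        ‖lam1 + (starRingEnd ℂ) lam2 - 2 * (μt : ℂ)‖ ^ 2)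
    let βt : ℝ := max (-α) (-β0)
    let s : ℝ := Real.sqrt (1 - (1 - α ^ 2) * (1 - βt ^ 2) / (1 + α * βt) ^ 2)
    ∀ t : ℝ, 0 ≤ t →
      Real.sqrt (∑ i, ‖f t i‖ ^ 2) ≤
        Real.sqrt ((1 + s) / (1 - s)) * Real.exp (-μt * t) *
          Real.sqrt (∑ i, ‖f 0 i‖ ^ 2) := by
  intro β0 βt s t ht
  have hw₁ : star w1 ⬝ᵥ w1 = 1 := by
    rw [star_dotProduct_self_eq, Real.sqrt_eq_one.1 hn1, ofReal_one]
  have hw₂ : star w2 ⬝ᵥ w2 = 1 := by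
    rw [star_dotProduct_self_eq, Real.sqrt_eq_one.1 hn2, ofReal_one]
  set g := exp (arg (star w1 ⬝ᵥ w2) * I)
  have hγ : star w1 ⬝ᵥ w2 = α * g := by rw [hα]; exact (norm_mul_exp_arg_mul_I _).symm
  have hβ0 : 0 ≤ β0 := by dsimp only [β0]; split_ifs <;> positivity
  have hβt : -α ≤ βt ∧ -β0 ≤ βt ∧ βt ≤ 0 :=
    ⟨le_max_left _ _, le_max_right _ _, max_le (by linarith) (by linarith)⟩
  have hb : ‖conj lam1 + lam2 - 2 * μt‖ * ‖(βt : ℂ) * g‖ ≤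
      2 * √((lam1.re - μt) * (lam2.re - μt)) := by
    rw [norm_mul, norm_exp_ofReal_mul_I, mul_one, norm_real, Real.norm_eq_abs,
      abs_of_nonpos hβt.2.2, ← norm_conj, map_sub, map_add, map_mul, conj_conj, conj_ofReal,
      map_ofNat]
    exact norm_mul_le_two_sqrt_of_le (show -βt ≤ β0 by linarith)
  have hdecay := antitone_exp_mul_hermForm (fun t ↦ hasDerivAt_star_dotProduct he1 (hf t))
    (fun t ↦ hasDerivAt_star_dotProduct he2 (hf t)) (by linarith) (by linarith) hb
  have hsandwich := hermForm_star_dotProduct_sandwich hw₁ hw₂ (norm_exp_ofReal_mul_I _) hγ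
    (by rwa [abs_of_nonneg hα0]) (show 0 ≤ α + βt by linarith)
  have hd : 0 < 1 + α * βt := by nlinarith
  rw [one_add_sqrt_div_one_sub_sqrt (by linarith) hd]
  exact sqrt_le_of_sandwich_of_antitone (by nlinarith) (by nlinarith)
    (fun t ↦ (hsandwich (f t)).1) (fun t ↦ (hsandwich (f t)).2) hdecay ht

theorem stmt17 (C : Matrix (Fin 2) (Fin 2) ℂ) (lam1 lam2 : ℂ)
    (w1 w2 : Fin 2 → ℂ) (α μ μs μt : ℝ)
    (hw1 : w1 ≠ 0) (hw2 : w2 ≠ 0)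
    (he1 : Cᴴ.mulVec w1 = (starRingEnd ℂ) lam1 • w1)
    (he2 : Cᴴ.mulVec w2 = (starRingEnd ℂ) lam2 • w2)
    (hn1 : Real.sqrt (∑ i, ‖w1 i‖ ^ 2) = 1) (hn2 : Real.sqrt (∑ i, ‖w2 i‖ ^ 2) = 1)
    (hα : α = ‖star w1 ⬝ᵥ w2‖) (hα0 : 0 ≤ α) (hα1 : α < 1)
    (hμ : lam1.re = μ) (hle : μ ≤ lam2.re) (hpos : 0 < μ)
    (hμs : IsLeast {l : ℝ | ∃ v : Fin 2 → ℂ, v ≠ 0 ∧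
        (((1 / 2 : ℂ)) • (C + Cᴴ)).mulVec v = (l : ℂ) • v} μs)
    (hμt1 : μs ≤ μt) (hμt2 : μt ≤ μ)
    (f : ℝ → Fin 2 → ℂ) (hf : ∀ t : ℝ, HasDerivAt f (-(C.mulVec (f t))) t) :
    let β0 : ℝ := if lam1 + (starRingEnd ℂ) lam2 - 2 * (μt : ℂ) = 0 then 1 else
      Real.sqrt (4 * (lam1.re - μt) * (lam2.re - μt) /
        ‖lam1 + (starRingEnd ℂ) lam2 - 2 * (μt : ℂ)‖ ^ 2)
    let βt : ℝ := max (-α) (-β0)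
    let s : ℝ := Real.sqrt (1 - (1 - α ^ 2) * (1 - βt ^ 2) / (1 + α * βt) ^ 2)
    ∀ t : ℝ, 0 ≤ t →
      Real.sqrt (∑ i, ‖f t i‖ ^ 2) ≤
        Real.sqrt ((1 + s) / (1 - s)) * Real.exp (-μt * t) *
          Real.sqrt (∑ i, ‖f 0 i‖ ^ 2) :=
  stmt17_general C lam1 lam2 w1 w2 α μ μt he1 he2 hn1 hn2 hα hα0 hα1 hμ hle hμt2 f hf
end

section
/- Let W = [[1,1,1],[0,1,1],[0,0,1]] · diag(1, 1/√2, 1/√3) and P(b₁,b₂,b₃) = W · diag(b₁,b₂,b₃) · W* for positive b₁,b₂,b₃. Then the condition number κ(P(2,4,3)) is strictly smaller than κ(P(1,1,1)); i.e., equal weights do not minimize the condition number among matrices of this form. -/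
/-!
Writing `U` for the upper unitriangular matrix of ones,
`P(b) = U · diag(b₁, b₂/2, b₃/3) · Uᵀ`, whose characteristic polynomial is explicit. For
`b = (2,4,3)` it is `(λ - 1)(λ² - 8λ + 4)`, so the spectrum is `{4 - 2√3, 1, 4 + 2√3}` and
`κ = (4 + 2√3)/(4 - 2√3) = 7 + 4√3 < 14`. For `b = (1,1,1)` it is a multiple of
`6λ³ - 18λ² + 9λ - 1`, all of whose roots are positive; sign changes on `[3/20, 4/25]` and
`[12/5, 5/2]` give `λ_min ≤ 4/25` and `λ_max ≥ 12/5`, so `κ ≥ 15`.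
-/

open Matrix

section Eigenvalues

variable {n R : Type*} [Fintype n] [DecidableEq n] [CommRing R]

def eigenvalueSet (A : Matrix n n R) : Set R :=
  {l | ∃ v : n → R, v ≠ 0 ∧ A.mulVec v = l • v}

theorem mem_eigenvalueSet_iff_det [IsDomain R] (A : Matrix n n R) (l : R) :
    l ∈ eigenvalueSet A ↔ (A - l • 1).det = 0 := by
  rw [← exists_mulVec_eq_zero_iff]
  simp only [eigenvalueSet, Set.mem_ofPred_eq, sub_mulVec, smul_mulVec, one_mulVec, sub_eq_zero]

end Eigenvalues

theorem det_fin_three_sub_smul_one {R : Type*} [CommRing R] (a b c d e f g h i l : R) :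
    (!![a, b, c; d, e, f; g, h, i] - l • 1).det =
      (a - l) * ((e - l) * (i - l) - f * h) - b * (d * (i - l) - f * g) +
        c * (d * h - (e - l) * g) := by
  simp [det_fin_three]
  ring

noncomputable def weightedGram (b : Fin 3 → ℝ) : Matrix (Fin 3) (Fin 3) ℝ :=
  (!![1, 1, 1; 0, 1, 1; 0, 0, 1] * diagonal ![1, 1 / √2, 1 / √3]) * diagonal b *
    (!![1, 1, 1; 0, 1, 1; 0, 0, 1] * diagonal ![1, 1 / √2, 1 / √3])ᵀ

theorem weightedGram_eq (b : Fin 3 → ℝ) :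
    weightedGram b =
      !![b 0 + b 1 / 2 + b 2 / 3, b 1 / 2 + b 2 / 3, b 2 / 3;
         b 1 / 2 + b 2 / 3, b 1 / 2 + b 2 / 3, b 2 / 3;
         b 2 / 3, b 2 / 3, b 2 / 3] := by
  have h2 : √2 ^ 2 = 2 := Real.sq_sqrt (by norm_num)
  have h3 : √3 ^ 2 = 3 := Real.sq_sqrt (by norm_num)
  have hdiag : diagonal ![1, 1 / √2, 1 / √3] * diagonal b * diagonal ![1, 1 / √2, 1 / √3] =
      diagonal ![b 0, b 1 / 2, b 2 / 3] := by
    rw [diagonal_mul_diagonal, diagonal_mul_diagonal]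
    congr 1
    ext i
    fin_cases i <;> field_simp <;> simp [h2, h3] <;> ring
  have hsandwich : weightedGram b = !![1, 1, 1; 0, 1, 1; 0, 0, 1] *
      (diagonal ![1, 1 / √2, 1 / √3] * diagonal b * diagonal ![1, 1 / √2, 1 / √3]) *
        !![1, 1, 1; 0, 1, 1; 0, 0, 1]ᵀ := by
    simp only [weightedGram, transpose_mul, diagonal_transpose, Matrix.mul_assoc]
  rw [hsandwich, hdiag]
  ext i j
  fin_cases i <;> fin_cases j <;>
    simp only [mul_apply, Fin.sum_univ_three, transpose_apply] <;> simp

theorem mem_eigenvalueSet_weightedGram_one_one_one (l : ℝ) :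
    l ∈ eigenvalueSet (weightedGram ![1, 1, 1]) ↔ 6 * l ^ 3 - 18 * l ^ 2 + 9 * l - 1 = 0 := by
  rw [mem_eigenvalueSet_iff_det, weightedGram_eq]
  simp only [det_fin_three_sub_smul_one, Matrix.cons_val]
  constructor <;> intro h
  · linear_combination (-6) * h
  · linear_combination (-1 / 6) * h

theorem mem_eigenvalueSet_weightedGram_two_four_three (l : ℝ) :
    l ∈ eigenvalueSet (weightedGram ![2, 4, 3]) ↔
      l = 1 ∨ l = 4 - 2 * √3 ∨ l = 4 + 2 * √3 := by
  have h3 : √3 ^ 2 = 3 := Real.sq_sqrt (by norm_num)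
  have hfactor : (!![2 + 4 / 2 + 3 / 3, 4 / 2 + 3 / 3, 3 / 3; 4 / 2 + 3 / 3, 4 / 2 + 3 / 3, 3 / 3;
      3 / 3, 3 / 3, 3 / 3] - l • 1 : Matrix (Fin 3) (Fin 3) ℝ).det =
        -((l - 1) * ((l - (4 - 2 * √3)) * (l - (4 + 2 * √3)))) := by
    rw [det_fin_three_sub_smul_one]
    linear_combination (-4 * (l - 1)) * h3
  rw [mem_eigenvalueSet_iff_det, weightedGram_eq]
  simp only [Matrix.cons_val, hfactor, neg_eq_zero, mul_eq_zero, sub_eq_zero]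

theorem isLeast_eigenvalueSet_weightedGram_two_four_three :
    IsLeast (eigenvalueSet (weightedGram ![2, 4, 3])) (4 - 2 * √3) := by
  have h : 3 / 2 < √3 := by
    rw [Real.lt_sqrt (by norm_num)]
    norm_num
  refine ⟨(mem_eigenvalueSet_weightedGram_two_four_three _).2 (.inr (.inl rfl)), fun l hl => ?_⟩
  rcases (mem_eigenvalueSet_weightedGram_two_four_three l).1 hl with rfl | rfl | rfl
  · linarith
  · rfl
  · linarith [Real.sqrt_nonneg 3]

theorem isGreatest_eigenvalueSet_weightedGram_two_four_three :
    IsGreatest (eigenvalueSet (weightedGram ![2, 4, 3])) (4 + 2 * √3) := by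
  refine ⟨(mem_eigenvalueSet_weightedGram_two_four_three _).2 (.inr (.inr rfl)), fun l hl => ?_⟩
  rcases (mem_eigenvalueSet_weightedGram_two_four_three l).1 hl with rfl | rfl | rfl
  · linarith [Real.sqrt_nonneg 3]
  · linarith [Real.sqrt_nonneg 3]
  · rfl

theorem pos_of_cubic_eq_zero {l : ℝ} (h : 6 * l ^ 3 - 18 * l ^ 2 + 9 * l - 1 = 0) : 0 < l := by
  by_contra! hl
  nlinarith [sq_nonneg l, mul_nonpos_of_nonneg_of_nonpos (sq_nonneg l) hl]

theorem exists_mem_Icc_cubic_eq_zero {a b : ℝ} (hab : a ≤ b)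
    (ha : 6 * a ^ 3 - 18 * a ^ 2 + 9 * a - 1 ≤ 0)
    (hb : 0 ≤ 6 * b ^ 3 - 18 * b ^ 2 + 9 * b - 1) :
    ∃ l ∈ Set.Icc a b, 6 * l ^ 3 - 18 * l ^ 2 + 9 * l - 1 = 0 :=
  intermediate_value_Icc hab (by fun_prop) ⟨ha, hb⟩

theorem stmt18
    (lmin1 lmax1 lmin2 lmax2 : ℝ)
    (hmin1 : IsLeast {l : ℝ | ∃ v : Fin 3 → ℝ, v ≠ 0 ∧
        ((!![1, 1, 1; 0, 1, 1; 0, 0, 1] * Matrix.diagonal ![1, 1 / Real.sqrt 2, 1 / Real.sqrt 3]) *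
          Matrix.diagonal ![(1 : ℝ), 1, 1] *
          (!![1, 1, 1; 0, 1, 1; 0, 0, 1] *
            Matrix.diagonal ![1, 1 / Real.sqrt 2, 1 / Real.sqrt 3])ᵀ).mulVec v = l • v} lmin1)
    (hmax1 : IsGreatest {l : ℝ | ∃ v : Fin 3 → ℝ, v ≠ 0 ∧
        ((!![1, 1, 1; 0, 1, 1; 0, 0, 1] * Matrix.diagonal ![1, 1 / Real.sqrt 2, 1 / Real.sqrt 3]) *
          Matrix.diagonal ![(1 : ℝ), 1, 1] *
          (!![1, 1, 1; 0, 1, 1; 0, 0, 1] *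
            Matrix.diagonal ![1, 1 / Real.sqrt 2, 1 / Real.sqrt 3])ᵀ).mulVec v = l • v} lmax1)
    (hmin2 : IsLeast {l : ℝ | ∃ v : Fin 3 → ℝ, v ≠ 0 ∧
        ((!![1, 1, 1; 0, 1, 1; 0, 0, 1] * Matrix.diagonal ![1, 1 / Real.sqrt 2, 1 / Real.sqrt 3]) *
          Matrix.diagonal ![(2 : ℝ), 4, 3] *
          (!![1, 1, 1; 0, 1, 1; 0, 0, 1] *
            Matrix.diagonal ![1, 1 / Real.sqrt 2, 1 / Real.sqrt 3])ᵀ).mulVec v = l • v} lmin2)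
    (hmax2 : IsGreatest {l : ℝ | ∃ v : Fin 3 → ℝ, v ≠ 0 ∧
        ((!![1, 1, 1; 0, 1, 1; 0, 0, 1] * Matrix.diagonal ![1, 1 / Real.sqrt 2, 1 / Real.sqrt 3]) *
          Matrix.diagonal ![(2 : ℝ), 4, 3] *
          (!![1, 1, 1; 0, 1, 1; 0, 0, 1] *
            Matrix.diagonal ![1, 1 / Real.sqrt 2, 1 / Real.sqrt 3])ᵀ).mulVec v = l • v} lmax2) :
    lmax2 / lmin2 < lmax1 / lmin1 := by
  have hmin₁ : IsLeast (eigenvalueSet (weightedGram ![1, 1, 1])) lmin1 := hmin1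
  have hmax₁ : IsGreatest (eigenvalueSet (weightedGram ![1, 1, 1])) lmax1 := hmax1
  have hmin₂ : lmin2 = 4 - 2 * √3 :=
    IsLeast.unique hmin2 isLeast_eigenvalueSet_weightedGram_two_four_three
  have hmax₂ : lmax2 = 4 + 2 * √3 :=
    IsGreatest.unique hmax2 isGreatest_eigenvalueSet_weightedGram_two_four_three
  obtain ⟨s, hs, hs₀⟩ := exists_mem_Icc_cubic_eq_zero (a := 3 / 20) (b := 4 / 25)
    (by norm_num) (by norm_num) (by norm_num)
  obtain ⟨r, hr, hr₀⟩ := exists_mem_Icc_cubic_eq_zero (a := 12 / 5) (b := 5 / 2)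
    (by norm_num) (by norm_num) (by norm_num)
  have hpos : 0 < lmin1 :=
    pos_of_cubic_eq_zero ((mem_eigenvalueSet_weightedGram_one_one_one _).1 hmin₁.1)
  have hle : lmin1 ≤ 4 / 25 :=
    (hmin₁.2 ((mem_eigenvalueSet_weightedGram_one_one_one _).2 hs₀)).trans hs.2
  have hge : 12 / 5 ≤ lmax1 :=
    hr.1.trans (hmax₁.2 ((mem_eigenvalueSet_weightedGram_one_one_one _).2 hr₀))
  have hκ₁ : 15 ≤ lmax1 / lmin1 := by
    rw [le_div_iff₀ hpos]
    linarith
  have hsqrt : √3 < 7 / 4 := by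
    rw [Real.sqrt_lt' (by norm_num)]
    norm_num
  have hκ₂ : lmax2 / lmin2 < 15 := by
    rw [hmin₂, hmax₂, div_lt_iff₀ (by linarith)]
    linarith
  linarith
end
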